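/- arXiv:0708.2054 — 11 statements merged into one kernel-verified Lean document; each statement's English description precedes it below -/
import Mathlib

section
/- Let G be a group, H a subgroup of G, and T a subgroup of H such that for every g ∈ G with g⁻¹Tg ⊆ H there exists h ∈ H with g⁻¹Tg = h⁻¹Th (the conjugacy property of maximal tori of a compact connected Lie group H). Then a coset gH ∈ G/H is a fixed point of the left-translation action of T on G/H (i.e. (tg)H = gH for all t ∈ T) if and only if g ∈ N_G(T)·H. -/
/-!
The coset `gH` is `T`-fixed exactly when `g⁻¹Tg ⊆ H`. The conjugacy hypothesis then yields
`h ∈ H` with `g⁻¹Tg = h⁻¹Th`, so `gh⁻¹` normalizes `T` and `g = (gh⁻¹)h ∈ N_G(T)·H`;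
conversely `(nh)⁻¹T(nh) = h⁻¹Th ⊆ H` for `n ∈ N_G(T)`, `h ∈ H`.
-/

open scoped Pointwise

namespace Subgroup

variable {G : Type*} [Group G]

theorem smul_mk_eq_mk_iff_conj_mem (H : Subgroup G) (t g : G) :
    t • (QuotientGroup.mk g : G ⧸ H) = QuotientGroup.mk g ↔ g⁻¹ * t * g ∈ H := by
  rw [MulAction.Quotient.smul_mk, smul_eq_mul, eq_comm, QuotientGroup.eq, mul_assoc]

theorem mul_inv_mem_normalizer_of_conj_image_eq {s : Set G} {a b : G}
    (h : (fun t => a⁻¹ * t * a) '' s = (fun t => b⁻¹ * t * b) '' s) :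
    a * b⁻¹ ∈ normalizer s := by
  rw [mem_normalizer_iff_conj_image_eq]
  calc MulAut.conj (a * b⁻¹) '' s = MulAut.conj a '' ((fun t => b⁻¹ * t * b) '' s) := by
        rw [Set.image_image]
        congr 1
        funext x
        rw [MulAut.conj_apply, MulAut.conj_apply]
        group
    _ = MulAut.conj a '' ((fun t => a⁻¹ * t * a) '' s) := by rw [h]
    _ = s := by simp only [Set.image_image, MulAut.conj_apply, mul_assoc, mul_inv_cancel_left,
        mul_inv_cancel, mul_one, Set.image_id']

theorem conj_mem_of_mem_normalizer_mul {T H : Subgroup G} (hTH : T ≤ H) {n h t : G}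
    (hn : n ∈ normalizer (T : Set G)) (hh : h ∈ H) (ht : t ∈ T) :
    (n * h)⁻¹ * t * (n * h) ∈ H := by
  have hnt : n⁻¹ * t * n ∈ T := (mem_set_normalizer_iff''.mp hn t).mp ht
  rw [show (n * h)⁻¹ * t * (n * h) = h⁻¹ * (n⁻¹ * t * n) * h by group]
  exact H.mul_mem (H.mul_mem (H.inv_mem hh) (hTH hnt)) hh

end Subgroup

open Subgroup in
/-- For a group `G`, subgroup `H`, and a subgroup `T ≤ H` satisfying the
conjugacy property of maximal tori (any conjugate of `T` contained in `H` is conjugate to `T`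
by an element of `H`), a coset `gH` is fixed by the left-translation action of `T` on `G/H`
if and only if `g ∈ N_G(T)·H`. -/
theorem fixed_points_of_torus_action {G : Type*} [Group G] (H T : Subgroup G) (hTH : T ≤ H)
    (hconj : ∀ g : G, (∀ t ∈ T, g⁻¹ * t * g ∈ H) →
      ∃ h ∈ H, (fun t => g⁻¹ * t * g) '' (T : Set G) = (fun t => h⁻¹ * t * h) '' (T : Set G))
    (g : G) :
    (∀ t ∈ T, (t : G) • (QuotientGroup.mk g : G ⧸ H) = QuotientGroup.mk g) ↔
      g ∈ (Subgroup.normalizer (T : Set G) : Set G) * (H : Set G) := by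
  simp only [smul_mk_eq_mk_iff_conj_mem]
  constructor
  · intro hmem
    obtain ⟨h, hh, heq⟩ := hconj g hmem
    exact ⟨g * h⁻¹, mul_inv_mem_normalizer_of_conj_image_eq heq, h, hh, inv_mul_cancel_right g h⟩
  · rintro ⟨n, hn, h, hh, rfl⟩ t ht
    exact conj_mem_of_mem_normalizer_mul hTH hn hh ht
end

section
/- Let F be a field of characteristic zero, let n ≥ 1, let x_1, …, x_{n+1} be pairwise distinct elements of F, let a_1, …, a_n ∈ F, and set f(s) = 1 + a_1 s + a_2 s² + ⋯ + a_n sⁿ. Define the polynomial Q(t) = Σ_{i=1}^{n+1} (Π_{j≠i} f(t(x_i − x_j))) / (Π_{j≠i} (x_i − x_j)) in F[t]. Then for every l with 0 ≤ l ≤ n−1, the coefficient of t^l in Q(t) is zero. (This is the localization constraint for the torus action on ℂPⁿ, whose weights at the i-th fixed point are x_i − x_j, j ≠ i.) -/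
open Polynomial Finset

/-!
Put `B(y, t) = ∏ⱼ p(t (y - xⱼ))` with `p(s) = 1 + a₁ s + ⋯ + aₙ sⁿ`. The coefficient `P_l(y)` of
`tˡ` in `B` has degree at most `l` in `y`, and since `p(0) = 1` its value at `y = xᵢ` is the
coefficient of `tˡ` in `∏_{j ≠ i} p(t (xᵢ - xⱼ))`. Hence the coefficient of `tˡ` in `Q` is
`Σᵢ P_l(xᵢ) / ∏_{j ≠ i} (xᵢ - xⱼ)`, which by Lagrange interpolation at the `n + 1` nodes is the
coefficient of `yⁿ` in `P_l`, and this vanishes for `l < n`.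
-/

namespace Polynomial

variable (R : Type*) [CommSemiring R]

/-- Bivariate polynomials `B(y, t)`, with `t` the outer variable, whose coefficient of `tᵐ` has
degree at most `m` in `y`. -/
def coeffNatDegreeLE : Subalgebra R R[X][X] where
  carrier := {B | ∀ m, (B.coeff m).natDegree ≤ m}
  mul_mem' {p q} hp hq m := by
    rw [coeff_mul]
    refine natDegree_sum_le_of_forall_le _ _ fun k hk => ?_
    calc (p.coeff k.1 * q.coeff k.2).natDegree
        ≤ (p.coeff k.1).natDegree + (q.coeff k.2).natDegree := natDegree_mul_le
      _ ≤ k.1 + k.2 := add_le_add (hp _) (hq _)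
      _ = m := mem_antidiagonal.mp hk
  add_mem' hp hq m := by
    rw [coeff_add]
    exact (natDegree_add_le _ _).trans (max_le (hp m) (hq m))
  algebraMap_mem' r m := by
    rw [algebraMap_apply, algebraMap_eq, coeff_C]
    split_ifs <;> simp

variable {R}

theorem C_mul_X_mem_coeffNatDegreeLE {c : R[X]} (hc : c.natDegree ≤ 1) :
    C c * X ∈ coeffNatDegreeLE R := by
  intro m
  rw [coeff_C_mul_X]
  split_ifs with h
  · omega
  · simp

theorem aeval_C_mul_X_mem_coeffNatDegreeLE {c : R[X]} (hc : c.natDegree ≤ 1) (p : R[X]) :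
    aeval (C c * X) p ∈ coeffNatDegreeLE R :=
  Algebra.adjoin_le (Set.singleton_subset_iff.2 (C_mul_X_mem_coeffNatDegreeLE hc))
    (aeval_mem_adjoin_singleton R _)

theorem map_aeval_C_mul_X (p : R[X]) (c : R[X]) (y : R) :
    (aeval (C c * X) p).map (evalRingHom y) = p.comp (C (c.eval y) * X) := by
  have := aeval_algHom_apply (mapAlgHom (aeval y)) (C c * X) p
  simpa [comp_eq_aeval] using this.symm

end Polynomial

theorem coeff_sum_inv_prod_sub_mul_prod_comp_eq_zero {ι F : Type*} [Field F] [DecidableEq ι]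
    {s : Finset ι} {x : ι → F} (hx : Set.InjOn x s) {p : F[X]} (hp : p.coeff 0 = 1) {l : ℕ}
    (hl : l + 1 < #s) :
    (∑ i ∈ s, C ((∏ j ∈ s.erase i, (x i - x j))⁻¹) *
      ∏ j ∈ s.erase i, p.comp (C (x i - x j) * X)).coeff l = 0 := by
  set B : F[X][X] := ∏ j ∈ s, aeval (C (X - C (x j)) * X) p
  have hB : (B.coeff l).natDegree ≤ l :=
    prod_mem (fun j _ => aeval_C_mul_X_mem_coeffNatDegreeLE (natDegree_X_sub_C_le (x j)) p) l
  have hBdeg : (B.coeff l).degree < #s :=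
    degree_le_natDegree.trans_lt (by exact_mod_cast (by omega : (B.coeff l).natDegree < #s))
  have heval : ∀ i ∈ s, (B.coeff l).eval (x i) =
      (∏ j ∈ s.erase i, p.comp (C (x i - x j) * X)).coeff l := fun i hi => by
    rw [← coe_evalRingHom, ← coeff_map, Polynomial.map_prod, ← mul_prod_erase _ _ hi]
    simp only [map_aeval_C_mul_X, eval_sub, eval_X, eval_C, sub_self, C_0, zero_mul, comp_zero,
      ← coeff_zero_eq_eval_zero, hp, C_1, one_mul]
  calc _ = ∑ i ∈ s, (B.coeff l).eval (x i) / ∏ j ∈ s.erase i, (x i - x j) := by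
        simp only [finsetSum_coeff, coeff_C_mul, div_eq_inv_mul]
        exact sum_congr rfl fun i hi => by rw [heval i hi]
    _ = (B.coeff l).coeff (#s - 1) := (Lagrange.coeff_eq_sum hx hBdeg).symm
    _ = 0 := coeff_eq_zero_of_natDegree_lt (by omega)

theorem cp_n_localization_low_coeffs_vanish_general {F : Type*} [Field F]
    (n : ℕ) (hn : 1 ≤ n) (x : Fin (n + 1) → F) (hx : Function.Injective x)
    (a : Fin n → F) (f : F → F[X])
    (hf : ∀ c : F, f c = 1 + ∑ k : Fin n, C (a k * c ^ (k.1 + 1)) * X ^ (k.1 + 1))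
    (l : ℕ) (hl : l ≤ n - 1) :
    (∑ i : Fin (n + 1),
        C ((∏ j ∈ Finset.univ.erase i, (x i - x j))⁻¹) *
          ∏ j ∈ Finset.univ.erase i, f (x i - x j)).coeff l = 0 := by
  set p : F[X] := 1 + ∑ k : Fin n, C (a k) * X ^ (k.1 + 1)
  have hfp : f = fun c => p.comp (C c * X) := funext fun c => by
    simp [hf, p, mul_pow, C_mul, C_pow, mul_assoc]
  subst hfp
  exact coeff_sum_inv_prod_sub_mul_prod_comp_eq_zero hx.injOn (by simp [p]) (by simp; omega)

/-- Localization constraint for the torus action on `ℂPⁿ`: with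
`f(s) = 1 + a₁ s + ⋯ + aₙ sⁿ` and pairwise distinct `x₁, …, x_{n+1}`, the polynomial
`Q(t) = Σᵢ Πⱼ≠ᵢ f(t(xᵢ−xⱼ)) / Πⱼ≠ᵢ (xᵢ−xⱼ)` has vanishing coefficients in degrees
`0 ≤ l ≤ n − 1`. -/
theorem cp_n_localization_low_coeffs_vanish {F : Type*} [Field F] [CharZero F]
    (n : ℕ) (hn : 1 ≤ n) (x : Fin (n + 1) → F) (hx : Function.Injective x)
    (a : Fin n → F) (f : F → F[X])
    (hf : ∀ c : F, f c = 1 + ∑ k : Fin n, C (a k * c ^ (k.1 + 1)) * X ^ (k.1 + 1))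
    (l : ℕ) (hl : l ≤ n - 1) :
    (∑ i : Fin (n + 1),
        C ((∏ j ∈ Finset.univ.erase i, (x i - x j))⁻¹) *
          ∏ j ∈ Finset.univ.erase i, f (x i - x j)).coeff l = 0 :=
  cp_n_localization_low_coeffs_vanish_general n hn x hx a f hf l hl
end

section
/- Let F be a field of characteristic zero, let n ≥ 1, and let x_1, …, x_{n+1} be pairwise distinct elements of F. Then Σ_{i=1}^{n+1} ( Σ_{j≠i} (x_i − x_j)ⁿ ) / ( Π_{j≠i} (x_i − x_j) ) = n + 1. (This computes the characteristic number s_n(ℂPⁿ) = n + 1 by localization, the weights at the i-th fixed point being x_i − x_j, j ≠ i.) -/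
open Polynomial Finset Lagrange

/-- Divided difference of a polynomial of degree `< n+1` at `n+1` distinct points
equals its coefficient of degree `n`. -/
lemma divDiff_eq_coeff {F : Type*} [Field F] (n : ℕ) (x : Fin (n + 1) → F)
    (hx : Function.Injective x) (f : F[X]) (hf : f.degree < n + 1) :
    ∑ i : Fin (n + 1), f.eval (x i) / ∏ j ∈ Finset.univ.erase i, (x i - x j)
      = f.coeff n := by
  have hvs : Set.InjOn x (Finset.univ : Finset (Fin (n + 1))) := hx.injOn
  have hcard : #(Finset.univ : Finset (Fin (n + 1))) = n + 1 := by simp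
  have hdeg : f.degree < #(Finset.univ : Finset (Fin (n + 1))) := by
    rw [hcard]; exact_mod_cast hf
  have hfe := Lagrange.eq_interpolate hvs hdeg
  -- coefficient n of the interpolation
  have hcoeff : f.coeff n
      = ∑ i : Fin (n + 1), f.eval (x i) * (Lagrange.basis Finset.univ x i).coeff n := by
    conv_lhs => rw [hfe]
    rw [interpolate_apply, Polynomial.finset_sum_coeff]
    exact Finset.sum_congr rfl fun i _ => by rw [Polynomial.coeff_C_mul]
  have hbasis : ∀ i : Fin (n + 1), (Lagrange.basis Finset.univ x i).coeff n
      = (∏ j ∈ Finset.univ.erase i, (x i - x j))⁻¹ := by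
    intro i
    have hi : i ∈ (Finset.univ : Finset (Fin (n + 1))) := Finset.mem_univ i
    rw [basis_eq_prod_sub_inv_mul_nodal_div hi, ← nodal_erase_eq_nodal_div hi,
      Polynomial.coeff_C_mul]
    have hmon : (nodal (Finset.univ.erase i) x).Monic := nodal_monic
    have hnd : (nodal (Finset.univ.erase i) x).natDegree = n := by
      rw [natDegree_nodal, Finset.card_erase_of_mem hi, hcard]
      omega
    have hc1 := hmon.coeff_natDegree
    rw [hnd] at hc1
    rw [hc1, mul_one, nodalWeight, Finset.prod_inv_distrib]
  rw [hcoeff]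
  exact Finset.sum_congr rfl fun i _ => by rw [hbasis i, div_eq_mul_inv]

/-- `s_n(ℂPⁿ) = n + 1` by localization: for pairwise distinct
`x₁, …, x_{n+1}` in a field of characteristic zero,
`Σᵢ (Σⱼ≠ᵢ (xᵢ−xⱼ)ⁿ) / (Πⱼ≠ᵢ (xᵢ−xⱼ)) = n + 1`. -/
theorem s_n_of_CPn {F : Type*} [Field F] [CharZero F]
    (n : ℕ) (hn : 1 ≤ n) (x : Fin (n + 1) → F) (hx : Function.Injective x) :
    ∑ i : Fin (n + 1),
        (∑ j ∈ Finset.univ.erase i, (x i - x j) ^ n) /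
          (∏ j ∈ Finset.univ.erase i, (x i - x j)) = (n : F) + 1 := by
  -- extend the inner sum over all j (the i = j term vanishes since n ≥ 1)
  have hext : ∀ i : Fin (n + 1),
      ∑ j ∈ Finset.univ.erase i, (x i - x j) ^ n
        = ∑ j : Fin (n + 1), (x i - x j) ^ n := by
    intro i
    rw [← Finset.add_sum_erase _ _ (Finset.mem_univ i), sub_self, zero_pow (by omega),
      zero_add]
  calc ∑ i : Fin (n + 1),
        (∑ j ∈ Finset.univ.erase i, (x i - x j) ^ n) /
          (∏ j ∈ Finset.univ.erase i, (x i - x j))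
      = ∑ j : Fin (n + 1), ∑ i : Fin (n + 1),
          ((X - C (x j)) ^ n : F[X]).eval (x i) /
            ∏ k ∈ Finset.univ.erase i, (x i - x k) := by
        rw [Finset.sum_comm]
        refine Finset.sum_congr rfl fun i _ => ?_
        rw [hext i, Finset.sum_div]
        refine Finset.sum_congr rfl fun j _ => ?_
        simp
    _ = ∑ j : Fin (n + 1), (((X - C (x j)) ^ n : F[X]).coeff n) := by
        refine Finset.sum_congr rfl fun j _ => ?_
        refine divDiff_eq_coeff n x hx _ ?_
        calc ((X - C (x j)) ^ n : F[X]).degree ≤ n := by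
              calc ((X - C (x j)) ^ n : F[X]).degree
                    ≤ n * 1 := Polynomial.degree_pow_le_of_le n
                      (Polynomial.degree_X_sub_C_le (x j))
                _ = n := by rw [mul_one]
          _ < n + 1 := by exact_mod_cast Nat.lt_succ_self n
    _ = (n : F) + 1 := by
        have : ∀ j : Fin (n + 1), (((X - C (x j)) ^ n : F[X]).coeff n) = 1 := by
          intro j
          have hmon : ((X - C (x j)) ^ n : F[X]).Monic :=
            (Polynomial.monic_X_sub_C (x j)).pow n
          have hnd : ((X - C (x j)) ^ n : F[X]).natDegree = n := by
            simp [Polynomial.natDegree_pow]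
          have hc1 := hmon.coeff_natDegree
          rw [hnd] at hc1
          exact hc1
        simp [this]
end

section
/- Let F be a field of characteristic zero, let x_1, x_2, x_3 be pairwise distinct elements of F, let a_1, a_2, a_3 ∈ F, and set f(s) = 1 + a_1 s + a_2 s² + a_3 s³. Then the coefficient of t³ in the polynomial Σ_{σ ∈ S_3} Π_{1≤i<j≤3} f(t(x_{σ(i)} − x_{σ(j)})) / (x_{σ(i)} − x_{σ(j)}) ∈ F[t] equals 6(a_1³ + a_1 a_2 − a_3). (This computes the complex cobordism class of the flag manifold U(3)/T³: [U(3)/T³] = 6(a_1³ + a_1a_2 − a_3).) -/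
/-!
Dividing by `d` rescales the cubic: `d⁻¹ f(t d) = d⁻¹ + a₁ t + a₂ d t² + a₃ d² t³`. Hence the
`t³`-coefficient of the summand for `σ` is an explicit rational function of the differences
`x_{σ(i)} - x_{σ(j)}`, a combination of `a₃`, `a₁ a₂` and `a₁³` with coefficients homogeneous of
degree `0`. Its symmetrization over `S₃` is constant: clearing the denominator
`∏_{i<j} (x_i - x_j)` turns this into a polynomial identity.
-/

open Polynomial

lemma coeff_three_mul_cubic {R : Type*} [CommRing R]
    (p₀ p₁ p₂ p₃ q₀ q₁ q₂ q₃ r₀ r₁ r₂ r₃ : R) :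
    ((C p₀ + C p₁ * X + C p₂ * X ^ 2 + C p₃ * X ^ 3) *
      ((C q₀ + C q₁ * X + C q₂ * X ^ 2 + C q₃ * X ^ 3) *
        (C r₀ + C r₁ * X + C r₂ * X ^ 2 + C r₃ * X ^ 3))).coeff 3 =
      p₃ * q₀ * r₀ + p₀ * q₃ * r₀ + p₀ * q₀ * r₃ + p₂ * q₁ * r₀ + p₂ * q₀ * r₁ +
        p₁ * q₂ * r₀ + p₀ * q₂ * r₁ + p₁ * q₀ * r₂ + p₀ * q₁ * r₂ + p₁ * q₁ * r₁ := by
  simp only [coeff_mul, Finset.Nat.sum_antidiagonal_eq_sum_range_succ_mk, Finset.sum_range_succ,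
    Finset.sum_range_zero]
  simp only [coeff_add, coeff_C, ↓reduceIte, mul_coeff_zero, coeff_X, one_ne_zero, mul_zero,
    add_zero, coeff_X_pow, OfNat.zero_ne_ofNat, tsub_zero, coeff_mul_X, coeff_C_mul,
    Nat.succ_ne_self, mul_one, zero_add, OfNat.one_ne_ofNat, Nat.add_one_sub_one, Nat.reduceEqDiff,
    Nat.reduceSub, tsub_self, Finset.range_zero, mul_ite, zero_tsub, Finset.sum_empty]
  ring

lemma C_inv_mul_cubic {F : Type*} [Field F] (a₁ a₂ a₃ : F) {d : F} (hd : d ≠ 0) :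
    C d⁻¹ * (1 + C (a₁ * d) * X + C (a₂ * d ^ 2) * X ^ 2 + C (a₃ * d ^ 3) * X ^ 3) =
      C d⁻¹ + C a₁ * X + C (a₂ * d) * X ^ 2 + C (a₃ * d ^ 2) * X ^ 3 := by
  simp only [mul_add, mul_one, ← mul_assoc (C _) (C _), ← C_mul]
  rw [show d⁻¹ * (a₁ * d) = a₁ by field_simp, show d⁻¹ * (a₂ * d ^ 2) = a₂ * d by field_simp,
    show d⁻¹ * (a₃ * d ^ 3) = a₃ * d ^ 2 by field_simp]

lemma prod_filter_lt_fin_three {M : Type*} [CommMonoid M] (g : Fin 3 × Fin 3 → M) :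
    ∏ p ∈ Finset.univ.filter (fun p : Fin 3 × Fin 3 => p.1 < p.2), g p =
      g (0, 1) * (g (0, 2) * g (1, 2)) := by
  rw [show Finset.univ.filter (fun p : Fin 3 × Fin 3 => p.1 < p.2) = {(0, 1), (0, 2), (1, 2)}
    by decide]
  simp

lemma sum_perm_fin_three {M : Type*} [AddCommMonoid M] (g : Fin 3 → Fin 3 → Fin 3 → M) :
    ∑ σ : Equiv.Perm (Fin 3), g (σ 0) (σ 1) (σ 2) =
      g 0 1 2 + g 1 0 2 + g 2 1 0 + g 0 2 1 + g 1 2 0 + g 2 0 1 := by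
  rw [show (Finset.univ : Finset (Equiv.Perm (Fin 3))) =
      {1, Equiv.swap 0 1, Equiv.swap 0 2, Equiv.swap 1 2,
       Equiv.swap 0 1 * Equiv.swap 1 2, Equiv.swap 1 2 * Equiv.swap 0 1} by decide]
  simp +decide [Finset.sum_insert, Equiv.swap_apply_of_ne_of_ne, add_assoc]

section FlagCoeff

variable {F : Type*} [Field F] (a₁ a₂ a₃ : F)

def flagCoeff (b c d : F) : F :=
  a₃ * ((b - c) ^ 2 / ((b - d) * (c - d)) + (b - d) ^ 2 / ((b - c) * (c - d)) +
      (c - d) ^ 2 / ((b - c) * (b - d))) +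
    a₁ * a₂ * ((b - c) / (c - d) + (b - c) / (b - d) + (b - d) / (c - d) + (b - d) / (b - c) +
      (c - d) / (b - d) + (c - d) / (b - c)) +
    a₁ ^ 3

variable {b c d : F}

lemma coeff_three_flagSummand (hbc : b ≠ c) (hbd : b ≠ d) (hcd : c ≠ d) :
    ((C (b - c)⁻¹ *
        (1 + C (a₁ * (b - c)) * X + C (a₂ * (b - c) ^ 2) * X ^ 2 + C (a₃ * (b - c) ^ 3) * X ^ 3)) *
      ((C (b - d)⁻¹ *
          (1 + C (a₁ * (b - d)) * X + C (a₂ * (b - d) ^ 2) * X ^ 2 +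
            C (a₃ * (b - d) ^ 3) * X ^ 3)) *
        (C (c - d)⁻¹ *
          (1 + C (a₁ * (c - d)) * X + C (a₂ * (c - d) ^ 2) * X ^ 2 +
            C (a₃ * (c - d) ^ 3) * X ^ 3)))).coeff 3 =
      flagCoeff a₁ a₂ a₃ b c d := by
  rw [C_inv_mul_cubic a₁ a₂ a₃ (sub_ne_zero.2 hbc), C_inv_mul_cubic a₁ a₂ a₃ (sub_ne_zero.2 hbd),
    C_inv_mul_cubic a₁ a₂ a₃ (sub_ne_zero.2 hcd), coeff_three_mul_cubic, flagCoeff]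
  simp only [div_eq_mul_inv, mul_inv]
  ring

lemma flagCoeff_symmetrize (hbc : b ≠ c) (hbd : b ≠ d) (hcd : c ≠ d) :
    flagCoeff a₁ a₂ a₃ b c d + flagCoeff a₁ a₂ a₃ c b d + flagCoeff a₁ a₂ a₃ d c b +
        flagCoeff a₁ a₂ a₃ b d c + flagCoeff a₁ a₂ a₃ c d b + flagCoeff a₁ a₂ a₃ d b c =
      6 * (a₁ ^ 3 + a₁ * a₂ - a₃) := by
  have := sub_ne_zero.2 hbc
  have := sub_ne_zero.2 hbd
  have := sub_ne_zero.2 hcd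
  unfold flagCoeff
  field_simp
  ring

end FlagCoeff

theorem cobordism_class_flag_U3_general {F : Type*} [Field F]
    (x : Fin 3 → F) (hx : Function.Injective x) (a₁ a₂ a₃ : F) (f : F → F[X])
    (hf : ∀ c : F, f c = 1 + C (a₁ * c) * X + C (a₂ * c ^ 2) * X ^ 2 + C (a₃ * c ^ 3) * X ^ 3) :
    (∑ σ : Equiv.Perm (Fin 3),
        ∏ p ∈ Finset.univ.filter (fun p : Fin 3 × Fin 3 => p.1 < p.2),
          C ((x (σ p.1) - x (σ p.2))⁻¹) * f (x (σ p.1) - x (σ p.2))).coeff 3 =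
      6 * (a₁ ^ 3 + a₁ * a₂ - a₃) := by
  simp only [finsetSum_coeff, prod_filter_lt_fin_three, hf]
  have hσ (σ : Equiv.Perm (Fin 3)) {i j : Fin 3} (hij : i ≠ j) : x (σ i) ≠ x (σ j) :=
    (hx.comp σ.injective).ne hij
  rw [Finset.sum_congr rfl fun σ _ => coeff_three_flagSummand a₁ a₂ a₃
    (hσ σ (by decide : (0 : Fin 3) ≠ 1)) (hσ σ (by decide : (0 : Fin 3) ≠ 2))
    (hσ σ (by decide : (1 : Fin 3) ≠ 2)),
    sum_perm_fin_three fun i j k => flagCoeff a₁ a₂ a₃ (x i) (x j) (x k)]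
  exact flagCoeff_symmetrize a₁ a₂ a₃ (hx.ne (by decide)) (hx.ne (by decide)) (hx.ne (by decide))

/-- The cobordism class of the flag manifold `U(3)/T³`: with
`f(s) = 1 + a₁s + a₂s² + a₃s³` and pairwise distinct `x₁, x₂, x₃`, the coefficient of `t³`
in `Σ_{σ ∈ S₃} Π_{i<j} f(t(x_{σ(i)}−x_{σ(j)}))/(x_{σ(i)}−x_{σ(j)})` equals
`6(a₁³ + a₁a₂ − a₃)`. -/
theorem cobordism_class_flag_U3 {F : Type*} [Field F] [CharZero F]
    (x : Fin 3 → F) (hx : Function.Injective x) (a₁ a₂ a₃ : F) (f : F → F[X])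
    (hf : ∀ c : F, f c = 1 + C (a₁ * c) * X + C (a₂ * c ^ 2) * X ^ 2 + C (a₃ * c ^ 3) * X ^ 3) :
    (∑ σ : Equiv.Perm (Fin 3),
        ∏ p ∈ Finset.univ.filter (fun p : Fin 3 × Fin 3 => p.1 < p.2),
          C ((x (σ p.1) - x (σ p.2))⁻¹) * f (x (σ p.1) - x (σ p.2))).coeff 3 =
      6 * (a₁ ^ 3 + a₁ * a₂ - a₃) :=
  cobordism_class_flag_U3_general x hx a₁ a₂ a₃ f hf
end

section
/- Let n ≥ 4 and set m = n(n−1)/2. Then in the polynomial ring ℤ[X_1, …, X_n] one has Σ_{σ ∈ S_n} sgn(σ) · Σ_{1≤i<j≤n} (X_{σ(i)} − X_{σ(j)})^m = 0. (Equivalently, the characteristic number s_m(U(n)/Tⁿ) of the flag manifold vanishes for n > 3.) -/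
open MvPolynomial

/-- `s_m(U(n)/Tⁿ) = 0` for `n ≥ 4`, `m = n(n−1)/2`: in `ℤ[X₁,…,Xₙ]`,
`Σ_{σ ∈ Sₙ} sgn(σ) Σ_{i<j} (X_{σ(i)} − X_{σ(j)})^m = 0`. -/
theorem s_m_flag_manifold_vanishes (n : ℕ) (hn : 4 ≤ n) :
    ∑ σ : Equiv.Perm (Fin n),
        (Equiv.Perm.sign σ : ℤ) •
          ∑ p ∈ Finset.univ.filter (fun p : Fin n × Fin n => p.1 < p.2),
            ((X (σ p.1) - X (σ p.2) : MvPolynomial (Fin n) ℤ)) ^ (n * (n - 1) / 2) = 0 := by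
  simp_rw [Finset.smul_sum]
  rw [Finset.sum_comm]
  refine Finset.sum_eq_zero fun p hp => ?_
  -- find two indices a b distinct from p.1, p.2
  have hcard : 1 < (({p.1, p.2} : Finset (Fin n))ᶜ).card := by
    rw [Finset.card_compl]
    have h2 : ({p.1, p.2} : Finset (Fin n)).card ≤ 2 := Finset.card_insert_le _ _ |>.trans (by simp)
    have h3 : Fintype.card (Fin n) = n := Fintype.card_fin n
    omega
  obtain ⟨a, ha, b, hb, hab⟩ := Finset.one_lt_card.mp hcard
  simp only [Finset.mem_compl, Finset.mem_insert, Finset.mem_singleton, not_or] at ha hb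
  set m := n * (n - 1) / 2
  set f : Equiv.Perm (Fin n) → MvPolynomial (Fin n) ℤ :=
    fun σ => (Equiv.Perm.sign σ : ℤ) • ((X (σ p.1) - X (σ p.2) : MvPolynomial (Fin n) ℤ)) ^ m
    with hf
  have key : ∀ σ : Equiv.Perm (Fin n), f (σ * Equiv.swap a b) = - f σ := by
    intro σ
    have h1 : (σ * Equiv.swap a b) p.1 = σ p.1 := by
      simp [Equiv.Perm.mul_apply, Equiv.swap_apply_of_ne_of_ne (Ne.symm ha.1) (Ne.symm hb.1)]
    have h2 : (σ * Equiv.swap a b) p.2 = σ p.2 := by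
      simp [Equiv.Perm.mul_apply, Equiv.swap_apply_of_ne_of_ne (Ne.symm ha.2) (Ne.symm hb.2)]
    rw [hf]
    simp only [h1, h2, Equiv.Perm.sign_mul, Equiv.Perm.sign_swap hab]
    push_cast
    rw [mul_neg_one, neg_smul]
  have hsum : ∑ σ : Equiv.Perm (Fin n), f σ = - ∑ σ : Equiv.Perm (Fin n), f σ := by
    calc ∑ σ : Equiv.Perm (Fin n), f σ
        = ∑ σ : Equiv.Perm (Fin n), f (σ * Equiv.swap a b) :=
          (Fintype.sum_equiv (Equiv.mulRight (Equiv.swap a b)) _ _ (fun σ => rfl)).symm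
      _ = - ∑ σ : Equiv.Perm (Fin n), f σ := by
          simp_rw [key]; rw [Finset.sum_neg_distrib]
  have h2S : (2 : ℤ) • (∑ σ : Equiv.Perm (Fin n), f σ) = 0 := by
    rw [two_smul]; nth_rewrite 1 [hsum]; exact neg_add_cancel _
  rcases smul_eq_zero.mp h2S with h | h
  · exact absurd h two_ne_zero
  · exact h
end

section
/- Let n ≥ 2, set m = n(n−1)/2, and work in the polynomial ring R = ℤ[a_1, …, a_m][X_1, …, X_n][t] with f(s) = 1 + Σ_{i=1}^{m} a_i s^i. Let G(t) = Σ_{σ ∈ S_n} sgn(σ) Π_{1≤i<j≤n} f(t(X_{σ(i)} − X_{σ(j)})). Let ω = (i_1, …, i_m) be a sequence of nonnegative integers with Σ_{l=1}^{m} l·i_l = m, and suppose i_k ≠ 0 for some k with k > 2n − 3. Then the coefficient of the monomial t^m · a_1^{i_1} ⋯ a_m^{i_m} in G(t) is the zero polynomial in X_1, …, X_n. (Equivalently, the characteristic number s_ω(U(n)/Tⁿ) of the flag manifold vanishes whenever ω has a nonzero entry in a position greater than 2n − 3.) -/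
/-!
The coefficient of `t^j a^μ` in a product of factors `f(t(X_a - X_b))` is a sum of products of
powers `(X_a - X_b)^(l+1)`, one for each `a_l` it contains, so each of its monomials `X^d` has
total degree at most `j`, and the presence of `a_k` forces some pair `a < b` with
`d_a + d_b ≥ k + 1 ≥ 2n - 2`. Alternating over `S_n` kills every monomial with two equal
exponents. A monomial with pairwise distinct exponents has total degree at least
`d_a + d_b + (0 + 1 + ⋯ + (n - 3)) ≥ 2n - 2 + (n - 2)(n - 3)/2 = m + 1`, so none survives
in the coefficient of `t^m`.
-/

/-- The set of pairs `i < j` in `Fin n × Fin n`. -/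
def flagPairs (n : ℕ) : Finset (Fin n × Fin n) :=
  Finset.univ.filter (fun p => p.1 < p.2)

/-- `f(t·d) = 1 + Σᵢ aᵢ dⁱ tⁱ` as an element of `ℤ[a₁,…,a_m][X₁,…,Xₙ][t]`, with the `aᵢ`
realized as the variables of the outer `MvPolynomial (Fin m)` and `d ∈ ℤ[X₁,…,Xₙ]`. -/
noncomputable def fFactor (n m : ℕ) (d : MvPolynomial (Fin n) ℤ) :
    Polynomial (MvPolynomial (Fin m) (MvPolynomial (Fin n) ℤ)) :=
  1 + ∑ i : Fin m,
    Polynomial.C (MvPolynomial.X i * MvPolynomial.C (d ^ (i.1 + 1))) * Polynomial.X ^ (i.1 + 1)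


open MvPolynomial Finset

section JointSupport

variable {R σ τ : Type*} [CommRing R]

def restrictJointSupport (A : AddSubmonoid (ℕ × (σ →₀ ℕ) × (τ →₀ ℕ))) :
    Subring (Polynomial (MvPolynomial σ (MvPolynomial τ R))) where
  carrier := {P | ∀ j μ d, d ∈ (coeff μ (P.coeff j)).support → (j, μ, d) ∈ A}
  zero_mem' := by simp
  one_mem' := by
    classical
    intro j μ d hd
    rw [Polynomial.coeff_one] at hd
    split_ifs at hd with hj
    · rw [coeff_one] at hd
      split_ifs at hd with hμ
      · rw [mem_support_iff, coeff_one, ite_ne_right_iff] at hd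
        rw [hj, ← hμ, ← hd.1]
        exact A.zero_mem
      · simp at hd
    · simp at hd
  add_mem' := by
    classical
    intro P Q hP hQ j μ d hd
    rw [Polynomial.coeff_add, coeff_add] at hd
    rcases Finset.mem_union.1 (support_add hd) with hd | hd
    exacts [hP j μ d hd, hQ j μ d hd]
  neg_mem' := by
    intro P hP j μ d hd
    rw [Polynomial.coeff_neg, coeff_neg, support_neg] at hd
    exact hP j μ d hd
  mul_mem' := by
    classical
    intro P Q hP hQ j μ d hd
    rw [Polynomial.coeff_mul, coeff_sum] at hd
    obtain ⟨x, hx, hd⟩ := mem_biUnion.1 (support_sum hd)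
    rw [coeff_mul] at hd
    obtain ⟨c, hc, hd⟩ := mem_biUnion.1 (support_sum hd)
    obtain ⟨d₁, hd₁, d₂, hd₂, rfl⟩ := mem_add.1 (support_mul _ _ hd)
    rw [HasAntidiagonal.mem_antidiagonal] at hx hc
    rw [← hx, ← hc]
    exact A.add_mem (hP _ _ _ hd₁) (hQ _ _ _ hd₂)

theorem mem_restrictJointSupport {A : AddSubmonoid (ℕ × (σ →₀ ℕ) × (τ →₀ ℕ))}
    {P : Polynomial (MvPolynomial σ (MvPolynomial τ R))} :
    P ∈ restrictJointSupport A ↔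
      ∀ j μ d, d ∈ (coeff μ (P.coeff j)).support → (j, μ, d) ∈ A :=
  Iff.rfl

theorem monomial_monomial_mem_restrictJointSupport
    {A : AddSubmonoid (ℕ × (σ →₀ ℕ) × (τ →₀ ℕ))} {j : ℕ} {μ : σ →₀ ℕ} {q : MvPolynomial τ R}
    (h : ∀ d ∈ q.support, (j, μ, d) ∈ A) :
    Polynomial.monomial j (monomial μ q) ∈ restrictJointSupport A := by
  classical
  rw [mem_restrictJointSupport]
  intro j' μ' d hd
  rw [Polynomial.coeff_monomial] at hd
  split_ifs at hd with hj
  · rw [coeff_monomial] at hd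
    split_ifs at hd with hμ
    · rw [← hj, ← hμ]
      exact h d hd
    · simp at hd
  · simp at hd

end JointSupport

theorem degree_le_and_le_add_of_mem_support_X_sub_X_pow {R τ : Type*} [CommRing R] [Nontrivial R]
    [Fintype τ] {a b : τ} {j : ℕ} {d : τ →₀ ℕ}
    (hd : d ∈ ((X a - X b : MvPolynomial τ R) ^ j).support) :
    ∑ v, d v ≤ j ∧ j ≤ d a + d b := by
  classical
  have hdeg : ∑ v, d v = j := by
    have := (((isHomogeneous_X R a).sub (isHomogeneous_X R b)).pow j).degree_eq_sum_deg_support hd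
    rw [one_mul] at this
    rw [this, sum_subset (subset_univ d.support) fun v _ hv => Finsupp.notMem_support_iff.1 hv]
  have hvars : ∀ v, d v ≠ 0 → v ∈ ({a, b} : Finset τ) := by
    intro v hv
    have hmem : v ∈ ((X a - X b : MvPolynomial τ R) ^ j).vars :=
      (mem_vars_iff_mem_support v).2 ⟨d, hd, Finsupp.mem_support_iff.2 hv⟩
    have := ((vars_pow _ _).trans (vars_sub_subset _)) hmem
    simpa [vars_X] using this
  refine ⟨hdeg.le, ?_⟩
  rw [← hdeg, ← sum_subset (subset_univ _) fun v _ hv => not_imp_comm.1 (hvars v) hv]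
  rcases eq_or_ne a b with rfl | hab
  · simp
  · rw [sum_pair hab]

def pairDominatedTriples {τ : Type*} [Fintype τ] (m : ℕ) (S : Finset (τ × τ)) :
    AddSubmonoid (ℕ × (Fin m →₀ ℕ) × (τ →₀ ℕ)) where
  carrier := {x | ∑ v, x.2.2 v ≤ x.1 ∧
    ∀ k : Fin m, x.2.1 k ≠ 0 → ∃ p ∈ S, k.1 + 1 ≤ x.2.2 p.1 + x.2.2 p.2}
  zero_mem' := by simp
  add_mem' := by
    rintro ⟨j₁, μ₁, d₁⟩ ⟨j₂, μ₂, d₂⟩ ⟨hdeg₁, hpair₁⟩ ⟨hdeg₂, hpair₂⟩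
    refine ⟨by simpa [sum_add_distrib] using add_le_add hdeg₁ hdeg₂, fun k hk => ?_⟩
    obtain ⟨p, hp, hle⟩ : ∃ p ∈ S, k.1 + 1 ≤ d₁ p.1 + d₁ p.2 ∨ k.1 + 1 ≤ d₂ p.1 + d₂ p.2 := by
      by_cases hk₁ : μ₁ k = 0
      · obtain ⟨p, hp, hle⟩ := hpair₂ k (by simpa [hk₁] using hk)
        exact ⟨p, hp, .inr hle⟩
      · obtain ⟨p, hp, hle⟩ := hpair₁ k hk₁
        exact ⟨p, hp, .inl hle⟩
    refine ⟨p, hp, ?_⟩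
    simp only [Prod.snd_add, Finsupp.add_apply]
    omega

theorem mem_pairDominatedTriples {τ : Type*} [Fintype τ] {m : ℕ} {S : Finset (τ × τ)} {j : ℕ}
    {μ : Fin m →₀ ℕ} {d : τ →₀ ℕ} :
    (j, μ, d) ∈ pairDominatedTriples m S ↔
      ∑ v, d v ≤ j ∧ ∀ k : Fin m, μ k ≠ 0 → ∃ p ∈ S, k.1 + 1 ≤ d p.1 + d p.2 :=
  Iff.rfl

theorem fFactor_mem_restrictJointSupport {n m : ℕ} {S : Finset (Fin n × Fin n)}
    {p : Fin n × Fin n} (hp : p ∈ S) :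
    fFactor n m (X p.1 - X p.2) ∈ restrictJointSupport (pairDominatedTriples m S) := by
  refine add_mem (one_mem _) (sum_mem fun i _ => ?_)
  rw [mul_comm (X i), C_mul_X_eq_monomial, Polynomial.C_mul_X_pow_eq_monomial]
  refine monomial_monomial_mem_restrictJointSupport fun d hd => ?_
  obtain ⟨hdeg, hpair⟩ := degree_le_and_le_add_of_mem_support_X_sub_X_pow hd
  refine mem_pairDominatedTriples.2 ⟨hdeg, fun k hk => ⟨p, hp, ?_⟩⟩
  obtain rfl : k = i := (Finsupp.single_apply_ne_zero.1 hk).1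
  exact hpair

theorem map_map_fFactor {n m : ℕ} (g : MvPolynomial (Fin n) ℤ →+* MvPolynomial (Fin n) ℤ)
    (D : MvPolynomial (Fin n) ℤ) : (fFactor n m D).map (map g) = fFactor n m (g D) := by
  simp [fFactor, Polynomial.map_sum]

theorem coeff_coeff_prod_fFactor_comp {n m : ℕ} (S : Finset (Fin n × Fin n)) (f : Fin n → Fin n)
    (j : ℕ) (μ : Fin m →₀ ℕ) :
    coeff μ ((∏ p ∈ S, fFactor n m (X (f p.1) - X (f p.2))).coeff j) =
      rename f (coeff μ ((∏ p ∈ S, fFactor n m (X p.1 - X p.2)).coeff j)) := by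
  have hmap : ∏ p ∈ S, fFactor n m (X (f p.1) - X (f p.2)) =
      (∏ p ∈ S, fFactor n m (X p.1 - X p.2)).map (map (rename f).toRingHom) := by
    simp [Polynomial.map_prod, map_map_fFactor]
  rw [hmap, Polynomial.coeff_map, coeff_map]
  rfl

section Alternation

variable {ι R : Type*} [Fintype ι] [DecidableEq ι] [CommRing R]

theorem sum_sign_smul_rename_monomial_eq_zero {d : ι →₀ ℕ} (hd : ¬ Function.Injective d)
    (c : R) :
    ∑ σ : Equiv.Perm ι, (Equiv.Perm.sign σ : ℤ) • rename σ (monomial d c) = 0 := by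
  obtain ⟨i, j, hdij, hij⟩ := Function.not_injective_iff.1 hd
  have hswap : Finsupp.mapDomain (Equiv.swap i j) d = d := by
    ext x
    rw [← Equiv.swap_apply_self i j x, Finsupp.mapDomain_apply (Equiv.injective _),
      Equiv.swap_apply_self]
    rcases eq_or_ne x i with rfl | hxi
    · rw [Equiv.swap_apply_left, hdij]
    rcases eq_or_ne x j with rfl | hxj
    · rw [Equiv.swap_apply_right, hdij]
    · rw [Equiv.swap_apply_of_ne_of_ne hxi hxj]
  refine sum_involution (fun σ _ => σ * Equiv.swap i j) (fun σ _ => ?_) (fun σ _ _ h => ?_)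
    (fun σ _ => mem_univ _) (fun σ _ => by simp)
  · rw [Equiv.Perm.coe_mul, ← rename_rename, rename_monomial (Equiv.swap i j), hswap,
      Equiv.Perm.sign_mul, Equiv.Perm.sign_swap hij]
    simp
  · exact hij.symm (by simpa using congrArg (· i) (mul_left_cancel (h.trans (mul_one σ).symm)))

theorem sum_sign_smul_rename_eq_zero (Q : MvPolynomial ι R)
    (hQ : ∀ d ∈ Q.support, ¬ Function.Injective d) :
    ∑ σ : Equiv.Perm ι, (Equiv.Perm.sign σ : ℤ) • rename σ Q = 0 := by
  conv_lhs => rw [← Q.support_sum_monomial_coeff]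
  simp_rw [map_sum, smul_sum]
  rw [sum_comm]
  exact sum_eq_zero fun d hd => sum_sign_smul_rename_monomial_eq_zero (hQ d hd) _

end Alternation

theorem sum_range_card_le_sum_of_injOn {ι : Type*} {s : Finset ι} {f : ι → ℕ}
    (hf : Set.InjOn f s) : ∑ i ∈ range #s, i ≤ ∑ x ∈ s, f x := by
  have hinj : Set.InjOn (fun x => (f x : ℤ)) s := Nat.cast_injective.comp_injOn hf
  have h := sum_range_le_sum (s := s.image fun x => (f x : ℤ)) (c := 0) (by simp)
  rw [card_image_of_injOn hinj, sum_image hinj] at h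
  zify
  simpa using h

theorem Function.Injective.add_add_sum_range_le_sum {ι : Type*} [Fintype ι] [DecidableEq ι]
    {f : ι → ℕ} (hf : Function.Injective f) {a b : ι} (hab : a ≠ b) :
    f a + f b + ∑ i ∈ range (Fintype.card ι - 2), i ≤ ∑ x, f x := by
  have hb : b ∈ univ.erase a := mem_erase.2 ⟨hab.symm, mem_univ b⟩
  have hcard : #((univ.erase a).erase b) = Fintype.card ι - 2 := by
    rw [card_erase_of_mem hb, card_erase_of_mem (mem_univ a), card_univ, Nat.sub_sub]
  rw [← add_sum_erase _ _ (mem_univ a), ← add_sum_erase _ _ hb, ← add_assoc, ← hcard]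
  exact Nat.add_le_add_left (sum_range_card_le_sum_of_injOn hf.injOn) _

theorem sum_range_id_add_two (r : ℕ) :
    ∑ i ∈ range (r + 2), i = ∑ i ∈ range r, i + (2 * r + 1) := by
  rw [sum_range_succ, sum_range_succ]
  ring

theorem s_omega_flag_vanishes_high_position_general (n : ℕ)
    (ω : Fin (n * (n - 1) / 2) → ℕ)
    (k : Fin (n * (n - 1) / 2)) (hk : ω k ≠ 0) (hk' : 2 * n - 3 < k.1 + 1) :
    MvPolynomial.coeff (Finsupp.equivFunOnFinite.symm ω)
      ((∑ σ : Equiv.Perm (Fin n),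
          (Equiv.Perm.sign σ : ℤ) •
            ∏ p ∈ flagPairs n,
              fFactor n (n * (n - 1) / 2)
                (MvPolynomial.X (σ p.1) - MvPolynomial.X (σ p.2))).coeff
        (n * (n - 1) / 2)) = 0 := by
  simp only [Polynomial.finsetSum_coeff, Polynomial.coeff_smul, coeff_sum, coeff_smul,
    coeff_coeff_prod_fFactor_comp]
  refine sum_sign_smul_rename_eq_zero _ fun d hd hinj => ?_
  obtain ⟨hdeg, hpair⟩ := mem_pairDominatedTriples.1 <|
    prod_mem (fun p hp => fFactor_mem_restrictJointSupport hp) _ _ d hd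
  obtain ⟨p, hp, hpk⟩ := hpair k (by simpa using hk)
  have hlt : p.1 < p.2 := (mem_filter.1 hp).2
  have hbound := hinj.add_add_sum_range_le_sum hlt.ne
  have htri : n * (n - 1) / 2 = ∑ i ∈ range (n - 2), i + (2 * (n - 2) + 1) := by
    rw [← sum_range_id_add_two, sum_range_id, show n - 2 + 2 = n by omega]
  rw [Fintype.card_fin] at hbound
  omega

/-- `s_ω(U(n)/Tⁿ) = 0` whenever `ω = (i₁,…,i_m)` (with `‖ω‖ = m = n(n−1)/2`)
has a nonzero entry in a position greater than `2n − 3`: the coefficient of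
`t^m a₁^{i₁} ⋯ a_m^{i_m}` in `G(t) = Σ_σ sgn(σ) Π_{i<j} f(t(X_{σ(i)}−X_{σ(j)}))` is the zero
polynomial in `X₁, …, Xₙ`. -/
theorem s_omega_flag_vanishes_high_position (n : ℕ) (hn : 2 ≤ n)
    (ω : Fin (n * (n - 1) / 2) → ℕ)
    (hω : ∑ l : Fin (n * (n - 1) / 2), (l.1 + 1) * ω l = n * (n - 1) / 2)
    (k : Fin (n * (n - 1) / 2)) (hk : ω k ≠ 0) (hk' : 2 * n - 3 < k.1 + 1) :
    MvPolynomial.coeff (Finsupp.equivFunOnFinite.symm ω)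
      ((∑ σ : Equiv.Perm (Fin n),
          (Equiv.Perm.sign σ : ℤ) •
            ∏ p ∈ flagPairs n,
              fFactor n (n * (n - 1) / 2)
                (MvPolynomial.X (σ p.1) - MvPolynomial.X (σ p.2))).coeff
        (n * (n - 1) / 2)) = 0 :=
  s_omega_flag_vanishes_high_position_general n ω k hk hk'
end

section
/- Let n ≥ 4, set m = n(n−1)/2, and work in the polynomial ring ℤ[a_1, …, a_m][X_1, …, X_n][t] with f(s) = 1 + Σ_{i=1}^{m} a_i s^i and f̃(s) = Σ_{1 ≤ 2l−1 ≤ m} a_{2l−1} s^{2l−1} (the odd-degree part of f − 1). Then the coefficient of t^m in Σ_{σ ∈ S_n} sgn(σ) Π_{1≤i<j≤n} f(t(X_{σ(i)} − X_{σ(j)})) equals the coefficient of t^m in Σ_{σ ∈ S_n} sgn(σ) · f̃(t(X_{σ(1)} − X_{σ(2)})) · f̃(t(X_{σ(n−1)} − X_{σ(n)})) · Π_{1≤i<j≤n, (i,j)≠(1,2),(n−1,n)} f(t(X_{σ(i)} − X_{σ(j)})). (Hence for n ≥ 4 the cobordism class of the flag manifold U(n)/Tⁿ is given as the coefficient of t^{n(n−1)/2}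 in L(f̃(t(x_1−x_2)) f̃(t(x_{n−1}−x_n)) Π_{(i,j)≠(1,2),(n−1,n)} f(t(x_i−x_j))).) -/
/-- `f̃(t·d) = Σ_{2l−1 ≤ m} a_{2l−1} d^{2l−1} t^{2l−1}`, the odd part of `f − 1`. -/
noncomputable def fFactorOdd (n m : ℕ) (d : MvPolynomial (Fin n) ℤ) :
    Polynomial (MvPolynomial (Fin m) (MvPolynomial (Fin n) ℤ)) :=
  ∑ i ∈ Finset.univ.filter (fun i : Fin m => (i.1 + 1) % 2 = 1),
    Polynomial.C (MvPolynomial.X i * MvPolynomial.C (d ^ (i.1 + 1))) * Polynomial.X ^ (i.1 + 1)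

/-!
Since `f(-s) = f(s) - 2 f̃(s)`, replacing `σ` by `σ ∘ (a b)` flips `sgn σ` and turns the factor
`f(t(X_{σ a} - X_{σ b}))` into `f - 2 f̃`, while the product over the remaining pairs is
unchanged whenever that set of pairs is stable under the transposition `(a b)`. Comparing the
antisymmetrized sum with its reindexed copy and cancelling `2` (the ring is torsion-free), the
factor `f` of the pair `(a, b)` may be replaced by `f̃`. For an adjacent pair `(k, k+1)` the other
pairs `i < j` are permuted by `(k k+1)`, so this applies to `(1,2)` and then, since `n ≥ 4` makes
it disjoint from `(1,2)`, to `(n-1,n)`. The identity thus holds for the whole polynomials in `t`,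
not only for their `t^m` coefficients.
-/

open Finset
open Equiv (Perm swap swap_apply_of_ne_of_ne)

theorem Equiv.Perm.sum_sign_smul_eq_of_mul_swap {ι M : Type*} [DecidableEq ι] [Fintype ι]
    [AddCommGroup M] [IsAddTorsionFree M] {a b : ι} (hab : a ≠ b) (g h : Perm ι → M)
    (hg : ∀ σ, g (σ * swap a b) = g σ - 2 • h σ) :
    ∑ σ : Perm ι, (Perm.sign σ : ℤ) • g σ = ∑ σ : Perm ι, (Perm.sign σ : ℤ) • h σ := by
  have hsum := Equiv.sum_comp (Equiv.mulRight (swap a b)) (fun σ => (Perm.sign σ : ℤ) • g σ)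
  simp only [Equiv.coe_mulRight, hg, Perm.sign_mul, Perm.sign_swap hab, smul_sub, mul_neg, mul_one,
    Units.val_neg, neg_smul, smul_comm _ (2 : ℕ), sum_neg_distrib, sum_sub_distrib,
    ← smul_sum] at hsum
  refine nsmul_right_injective two_ne_zero (?_ : 2 • _ = 2 • _)
  rw [← sub_eq_zero, ← neg_eq_zero, ← sub_eq_zero.mpr hsum]
  abel

theorem Finset.prod_comp_of_involutive {α β : Type*} [CommMonoid β] {e : α → α}
    (he : Function.Involutive e) {s : Finset α} (hs : ∀ x ∈ s, e x ∈ s) (f : α → β) :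
    ∏ x ∈ s, f (e x) = ∏ x ∈ s, f x :=
  prod_nbij' e e hs hs (fun x _ => he x) (fun x _ => he x) fun _ _ => rfl

theorem Finset.forall_apply_mem_erase {α : Type*} [DecidableEq α] {e : α → α}
    (he : Function.Injective e) {s : Finset α} (hs : ∀ x ∈ s, e x ∈ s) {y : α} (hy : e y = y) :
    ∀ x ∈ s.erase y, e x ∈ s.erase y := by
  intro x hx
  rw [mem_erase] at hx ⊢
  exact ⟨fun h => hx.1 (he (h.trans hy.symm)), hs x hx.2⟩

theorem fFactor_neg (n m : ℕ) (d : MvPolynomial (Fin n) ℤ) :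
    fFactor n m (-d) = fFactor n m d - 2 • fFactorOdd n m d := by
  have hpow (k : ℕ) : (-d) ^ k = d ^ k - 2 • if k % 2 = 1 then d ^ k else 0 := by
    split_ifs with hodd
    · rw [(Nat.odd_iff.mpr hodd).neg_pow]
      abel
    · rw [(Nat.even_iff.mpr (by omega)).neg_pow, smul_zero, sub_zero]
  rw [fFactor, fFactor, fFactorOdd, sum_filter, smul_sum]
  -- the ring must be named: inferred from the goal, these lemmas fail to match its instances
  rw [add_sub_assoc (1 : Polynomial (MvPolynomial (Fin m) (MvPolynomial (Fin n) ℤ)))]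
  congr 1
  rw [← Finset.sum_sub_distrib (G := Polynomial (MvPolynomial (Fin m) (MvPolynomial (Fin n) ℤ)))]
  refine sum_congr rfl fun i _ => ?_
  rw [hpow]
  split_ifs
  · rw [map_sub, map_nsmul, mul_sub, mul_smul_comm, map_sub, map_nsmul]
    ring
  · rw [smul_zero, sub_zero, smul_zero]
    abel

theorem mem_flagPairs {n : ℕ} {p : Fin n × Fin n} : p ∈ flagPairs n ↔ p.1 < p.2 := by
  simp [flagPairs]

theorem prodMap_swap_mem_erase_flagPairs {n : ℕ} {a b : Fin n} (hab : a.val + 1 = b.val) :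
    ∀ p ∈ (flagPairs n).erase (a, b),
      Prod.map (swap a b) (swap a b) p ∈ (flagPairs n).erase (a, b) := by
  rintro ⟨x, y⟩ hp
  simp only [mem_erase, mem_flagPairs, ne_eq, Prod.mk.injEq, Prod.map_apply] at hp ⊢
  simp only [Equiv.swap_apply_def, Fin.ext_iff, Fin.lt_def] at hp ⊢
  split_ifs <;> omega

theorem prodMap_swap_mem_erase_erase_flagPairs {n : ℕ} {a b c d : Fin n} (hab : a.val + 1 = b.val)
    (hc : swap a b c = c) (hd : swap a b d = d) :
    ∀ p ∈ ((flagPairs n).erase (c, d)).erase (a, b),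
      Prod.map (swap a b) (swap a b) p ∈ ((flagPairs n).erase (c, d)).erase (a, b) := by
  rw [erase_right_comm]
  exact Finset.forall_apply_mem_erase
    (Function.Involutive.prodMap (Equiv.swap_apply_self a b) (Equiv.swap_apply_self a b)).injective
    (prodMap_swap_mem_erase_flagPairs hab) (Prod.ext hc hd)

section Antisymmetrization

variable {n m : ℕ} {a b : Fin n}

theorem sum_sign_smul_mul_fFactor_eq_fFactorOdd (hab : a ≠ b)
    (Φ : Perm (Fin n) → Polynomial (MvPolynomial (Fin m) (MvPolynomial (Fin n) ℤ)))
    (hΦ : ∀ σ, Φ (σ * swap a b) = Φ σ) :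
    ∑ σ : Perm (Fin n), (Perm.sign σ : ℤ) •
        (Φ σ * fFactor n m (MvPolynomial.X (σ a) - MvPolynomial.X (σ b))) =
      ∑ σ : Perm (Fin n), (Perm.sign σ : ℤ) •
        (Φ σ * fFactorOdd n m (MvPolynomial.X (σ a) - MvPolynomial.X (σ b))) := by
  refine Perm.sum_sign_smul_eq_of_mul_swap
    (M := Polynomial (MvPolynomial (Fin m) (MvPolynomial (Fin n) ℤ))) hab _ _ fun σ => ?_
  rw [hΦ, Perm.mul_apply, Perm.mul_apply, Equiv.swap_apply_left, Equiv.swap_apply_right, ← neg_sub,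
    fFactor_neg]
  ring

theorem sum_sign_smul_mul_prod_fFactor_eq (hab : a ≠ b) {T : Finset (Fin n × Fin n)}
    (hmem : (a, b) ∈ T)
    (hT : ∀ p ∈ T.erase (a, b), Prod.map (swap a b) (swap a b) p ∈ T.erase (a, b))
    (Φ : Perm (Fin n) → Polynomial (MvPolynomial (Fin m) (MvPolynomial (Fin n) ℤ)))
    (hΦ : ∀ σ, Φ (σ * swap a b) = Φ σ) :
    ∑ σ : Perm (Fin n), (Perm.sign σ : ℤ) • (Φ σ *
        ∏ p ∈ T, fFactor n m (MvPolynomial.X (σ p.1) - MvPolynomial.X (σ p.2))) =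
      ∑ σ : Perm (Fin n), (Perm.sign σ : ℤ) • (Φ σ *
        fFactorOdd n m (MvPolynomial.X (σ a) - MvPolynomial.X (σ b)) *
        ∏ p ∈ T.erase (a, b), fFactor n m (MvPolynomial.X (σ p.1) - MvPolynomial.X (σ p.2))) := by
  set P : Perm (Fin n) → Polynomial (MvPolynomial (Fin m) (MvPolynomial (Fin n) ℤ)) :=
    fun σ => ∏ p ∈ T.erase (a, b), fFactor n m (MvPolynomial.X (σ p.1) - MvPolynomial.X (σ p.2))
  have hP (σ : Perm (Fin n)) : P (σ * swap a b) = P σ :=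
    Finset.prod_comp_of_involutive (Function.Involutive.prodMap (Equiv.swap_apply_self a b)
      (Equiv.swap_apply_self a b)) hT
      fun p => fFactor n m (MvPolynomial.X (σ p.1) - MvPolynomial.X (σ p.2))
  have key := sum_sign_smul_mul_fFactor_eq_fFactorOdd hab (fun σ => Φ σ * P σ)
    fun σ => by rw [hΦ, hP]
  simp only [← mul_prod_erase T _ hmem]
  convert key using 3 <;> ring

end Antisymmetrization

/-- For `n ≥ 4` and `m = n(n−1)/2`, the coefficient of `t^m` in
`Σ_σ sgn(σ) Π_{i<j} f(t(X_{σ(i)}−X_{σ(j)}))` equals the coefficient of `t^m` in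
`Σ_σ sgn(σ) f̃(t(X_{σ(1)}−X_{σ(2)})) f̃(t(X_{σ(n−1)}−X_{σ(n)}))
Π_{(i,j)≠(1,2),(n−1,n)} f(t(X_{σ(i)}−X_{σ(j)}))`. -/
theorem flag_cobordism_odd_reduction (n : ℕ) (hn : 4 ≤ n) :
    (∑ σ : Equiv.Perm (Fin n),
        (Equiv.Perm.sign σ : ℤ) •
          ∏ p ∈ flagPairs n,
            fFactor n (n * (n - 1) / 2)
              (MvPolynomial.X (σ p.1) - MvPolynomial.X (σ p.2))).coeff (n * (n - 1) / 2) =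
    (∑ σ : Equiv.Perm (Fin n),
        (Equiv.Perm.sign σ : ℤ) •
          (fFactorOdd n (n * (n - 1) / 2)
              (MvPolynomial.X (σ ⟨0, by omega⟩) - MvPolynomial.X (σ ⟨1, by omega⟩)) *
            fFactorOdd n (n * (n - 1) / 2)
              (MvPolynomial.X (σ ⟨n - 2, by omega⟩) - MvPolynomial.X (σ ⟨n - 1, by omega⟩)) *
            ∏ p ∈ ((flagPairs n).erase (⟨0, by omega⟩, ⟨1, by omega⟩)).erase
                (⟨n - 2, by omega⟩, ⟨n - 1, by omega⟩),
              fFactor n (n * (n - 1) / 2)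
                (MvPolynomial.X (σ p.1) - MvPolynomial.X (σ p.2)))).coeff
      (n * (n - 1) / 2) := by
  set a₁ : Fin n := ⟨0, by omega⟩
  set b₁ : Fin n := ⟨1, by omega⟩
  set a₂ : Fin n := ⟨n - 2, by omega⟩
  set b₂ : Fin n := ⟨n - 1, by omega⟩
  have hadj₂ : a₂.val + 1 = b₂.val := by simp only [a₂, b₂]; omega
  have ha₁ : swap a₂ b₂ a₁ = a₁ :=
    swap_apply_of_ne_of_ne (Fin.ne_of_val_ne (by simp only [a₁, a₂]; omega))
      (Fin.ne_of_val_ne (by simp only [a₁, b₂]; omega))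
  have hb₁ : swap a₂ b₂ b₁ = b₁ :=
    swap_apply_of_ne_of_ne (Fin.ne_of_val_ne (by simp only [b₁, a₂]; omega))
      (Fin.ne_of_val_ne (by simp only [b₁, b₂]; omega))
  have step₁ := sum_sign_smul_mul_prod_fFactor_eq (m := n * (n - 1) / 2) (a := a₁) (b := b₁)
    (Fin.ne_of_val_ne zero_ne_one) (mem_flagPairs.mpr (Fin.mk_lt_mk.mpr zero_lt_one))
    (prodMap_swap_mem_erase_flagPairs rfl) (fun _ => 1) fun _ => rfl
  have step₂ := sum_sign_smul_mul_prod_fFactor_eq (m := n * (n - 1) / 2) (a := a₂) (b := b₂)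
    (T := (flagPairs n).erase (a₁, b₁))
    (Fin.ne_of_val_ne (by omega))
    (mem_erase.mpr ⟨fun h => by simp only [a₁, a₂, Prod.mk.injEq, Fin.mk.injEq] at h; omega,
      mem_flagPairs.mpr (Fin.mk_lt_mk.mpr (by omega))⟩)
    (prodMap_swap_mem_erase_erase_flagPairs hadj₂ ha₁ hb₁)
    (fun σ => fFactorOdd n (n * (n - 1) / 2) (MvPolynomial.X (σ a₁) - MvPolynomial.X (σ b₁)))
    fun σ => by simp only [Perm.mul_apply, ha₁, hb₁]
  simp only [one_mul] at step₁
  rw [step₁, step₂]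
end

section
/- Let n ≥ 4 with n ≡ 0 or 1 (mod 4), set m = n(n−1)/2, and work in ℤ[a_1, …, a_m][X_1, …, X_n][t] with f(s) = 1 + Σ_{i=1}^{m} a_i s^i. Let G(t) = Σ_{σ ∈ S_n} sgn(σ) Π_{1≤i<j≤n} f(t(X_{σ(i)} − X_{σ(j)})). Let ω = (i_1, …, i_m) be a sequence of nonnegative integers with Σ_{l=1}^{m} l·i_l = m such that i_{2l−1} = 0 for every l with 1 ≤ 2l−1 ≤ m (i.e. ω is supported on even positions). Then the coefficient of the monomial t^m · a_1^{i_1} ⋯ a_m^{i_m} in G(t) is the zero polynomial in X_1, …, X_n. (Equivalently, s_ω(U(n)/Tⁿ) = 0 for such ω.) -/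
/-!
Setting the odd-indexed `aᵢ` to zero does not change the coefficient of a monomial in the
even-indexed `aᵢ` alone. After this substitution `f` is an even function, so each factor
`f(t(X_i − X_j))` is symmetric in `i, j`; the product over `i < j` then no longer depends on `σ`,
and `G` collapses to `(Σ_σ sgn σ) · ∏_{i<j} f(t(X_i − X_j)) = 0`.
-/

open Finset Equiv MvPolynomial

theorem Equiv.Perm.sum_sign_eq_zero {α : Type*} [Fintype α] [DecidableEq α] [Nontrivial α] :
    ∑ σ : Perm α, (Perm.sign σ : ℤ) = 0 := by
  refine sum_hom_units_eq_zero ((Units.coeHom ℤ).comp Perm.sign) fun h => ?_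
  obtain ⟨σ, hσ⟩ := Perm.sign_surjective α (-1)
  simpa [hσ] using DFunLike.congr_fun h σ

section FlagPairs

variable {n : ℕ} {M : Type*} [CommMonoid M]

theorem prod_flagPairs_eq_prod_not_isDiag (g : Sym2 (Fin n) → M) :
    ∏ p ∈ flagPairs n, g s(p.1, p.2) = ∏ z with ¬ z.IsDiag, g z := by
  have h := sum_sym2_filter_not_isDiag (M := Additive M) univ (fun z => Additive.ofMul (g z))
  rw [sym2_univ] at h
  apply_fun Additive.toMul at h
  simp only [toMul_sum, toMul_ofMul] at h
  rw [h]
  congr 1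
  ext p
  simpa [flagPairs] using fun h => h.ne

theorem prod_flagPairs_comp_perm (g : Sym2 (Fin n) → M) (σ : Perm (Fin n)) :
    ∏ p ∈ flagPairs n, g s(σ p.1, σ p.2) = ∏ p ∈ flagPairs n, g s(p.1, p.2) := by
  have key := prod_flagPairs_eq_prod_not_isDiag (g ∘ Sym2.map σ)
  simp only [Function.comp_apply, Sym2.map_mk] at key
  rw [key, prod_flagPairs_eq_prod_not_isDiag g, prod_filter, prod_filter]
  exact Fintype.prod_bijective (Sym2.map σ) (Sym2.map.injective σ.injective).bijective_of_finite
    _ _ fun z => by simp [Sym2.isDiag_map σ.injective]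

end FlagPairs

section KillCompl

variable {R σ τ : Type*} [CommSemiring R] {f : σ → τ} (hf : Function.Injective f)

theorem MvPolynomial.killCompl_X_of_notMem_range {i : τ} (hi : i ∉ Set.range f) :
    killCompl (R := R) hf (X i) = 0 := by
  simp [killCompl, hi]

theorem MvPolynomial.coeff_eq_coeff_killCompl {d : τ →₀ ℕ} (hd : ↑d.support ⊆ Set.range f)
    (p : MvPolynomial τ R) :
    p.coeff d = (killCompl hf p).coeff (d.comapDomain f hf.injOn) := by
  rw [coeff_killCompl, Finsupp.mapDomain_comapDomain f hf d hd]

end KillCompl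

/-- The variable `i : Fin m` stands for `a_{i+1}`; the odd-indexed ones are sent to `0`. -/
noncomputable def killOddVars (R : Type*) [CommSemiring R] (m : ℕ) :
    MvPolynomial (Fin m) R →+* MvPolynomial {i : Fin m // Even (i.1 + 1)} R :=
  (killCompl (R := R) (Subtype.val_injective (p := fun i : Fin m => Even (i.1 + 1)))).toRingHom

theorem map_killOddVars_fFactor_neg (n m : ℕ) (d : MvPolynomial (Fin n) ℤ) :
    (fFactor n m (-d)).map (killOddVars _ m) = (fFactor n m d).map (killOddVars _ m) := by
  simp only [fFactor, Polynomial.map_add, Polynomial.map_one, Polynomial.map_sum]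
  refine congrArg (1 + ·) (sum_congr rfl fun i _ => ?_)
  simp only [Polynomial.map_mul, Polynomial.map_C, Polynomial.map_pow, Polynomial.map_X]
  refine congrArg (fun a => Polynomial.C a * Polynomial.X ^ (i.1 + 1)) ?_
  rcases Nat.even_or_odd (i.1 + 1) with hi | hi
  · rw [hi.neg_pow]
  · have hkill : killOddVars (MvPolynomial (Fin n) ℤ) m (X i) = 0 :=
      killCompl_X_of_notMem_range _ fun ⟨j, hj⟩ => Nat.not_even_iff_odd.mpr hi (hj ▸ j.2)
    rw [map_mul, map_mul, hkill, zero_mul, zero_mul]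

noncomputable def alternatingFlagSum (n m : ℕ) :
    Polynomial (MvPolynomial (Fin m) (MvPolynomial (Fin n) ℤ)) :=
  ∑ σ : Perm (Fin n), (Perm.sign σ : ℤ) •
    ∏ p ∈ flagPairs n, fFactor n m (X (σ p.1) - X (σ p.2))

theorem map_killOddVars_alternatingFlagSum (n m : ℕ) [Nontrivial (Fin n)] :
    (alternatingFlagSum n m).map (killOddVars _ m) = 0 := by
  let F := fun d => (fFactor n m d).map (killOddVars (MvPolynomial (Fin n) ℤ) m)
  let g : Sym2 (Fin n) → _ := Sym2.lift ⟨fun i j => F (X i - X j), fun i j => by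
    simp only [F, ← neg_sub (X i), map_killOddVars_fFactor_neg]⟩
  have hσ (σ : Perm (Fin n)) :
      ((Perm.sign σ : ℤ) • ∏ p ∈ flagPairs n, fFactor n m (X (σ p.1) - X (σ p.2))).map
        (killOddVars _ m) = (Perm.sign σ : ℤ) • ∏ p ∈ flagPairs n, g s(p.1, p.2) := by
    rw [← prod_flagPairs_comp_perm g σ]
    exact (map_zsmul (Polynomial.mapRingHom (killOddVars (MvPolynomial (Fin n) ℤ) m)) _ _).trans
      (congrArg _ (Polynomial.map_prod _ _ _))
  simp only [alternatingFlagSum, Polynomial.map_sum, hσ, ← sum_smul, Perm.sum_sign_eq_zero,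
    zero_smul]

theorem coeff_coeff_alternatingFlagSum_eq_zero (n m k : ℕ) [Nontrivial (Fin n)]
    {d : Fin m →₀ ℕ} (hd : ∀ i ∈ d.support, Even (i.1 + 1)) :
    ((alternatingFlagSum n m).coeff k).coeff d = 0 := by
  have hrange : ↑d.support ⊆ Set.range (Subtype.val : {i : Fin m // Even (i.1 + 1)} → Fin m) :=
    fun i hi => ⟨⟨i, hd i hi⟩, rfl⟩
  rw [coeff_eq_coeff_killCompl Subtype.val_injective hrange]
  change coeff _ (killOddVars _ m _) = 0
  rw [← Polynomial.coeff_map, map_killOddVars_alternatingFlagSum, Polynomial.coeff_zero,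
    coeff_zero]

theorem s_omega_flag_vanishes_even_support_general (n : ℕ) (hn : 4 ≤ n)
    (ω : Fin (n * (n - 1) / 2) → ℕ)
    (heven : ∀ l : Fin (n * (n - 1) / 2), (l.1 + 1) % 2 = 1 → ω l = 0) :
    MvPolynomial.coeff (Finsupp.equivFunOnFinite.symm ω)
      ((∑ σ : Equiv.Perm (Fin n),
          (Equiv.Perm.sign σ : ℤ) •
            ∏ p ∈ flagPairs n,
              fFactor n (n * (n - 1) / 2)
                (MvPolynomial.X (σ p.1) - MvPolynomial.X (σ p.2))).coeff
        (n * (n - 1) / 2)) = 0 := by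
  have : Nontrivial (Fin n) := Fin.nontrivial_iff_two_le.mpr (by omega)
  exact coeff_coeff_alternatingFlagSum_eq_zero n _ _ fun l hl => Nat.not_odd_iff_even.mp
    fun hodd => Finsupp.mem_support_iff.mp hl (heven l (Nat.odd_iff.mp hodd))

/-- For `n ≥ 4` with `n ≡ 0` or `1 (mod 4)`, `m = n(n−1)/2`, and `ω`
supported on even positions with `‖ω‖ = m`, the coefficient of `t^m a₁^{i₁} ⋯ a_m^{i_m}`
in `G(t) = Σ_σ sgn(σ) Π_{i<j} f(t(X_{σ(i)}−X_{σ(j)}))` is the zero polynomial; i.e.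
`s_ω(U(n)/Tⁿ) = 0`. -/
theorem s_omega_flag_vanishes_even_support (n : ℕ) (hn : 4 ≤ n)
    (hmod : n % 4 = 0 ∨ n % 4 = 1)
    (ω : Fin (n * (n - 1) / 2) → ℕ)
    (hω : ∑ l : Fin (n * (n - 1) / 2), (l.1 + 1) * ω l = n * (n - 1) / 2)
    (heven : ∀ l : Fin (n * (n - 1) / 2), (l.1 + 1) % 2 = 1 → ω l = 0) :
    MvPolynomial.coeff (Finsupp.equivFunOnFinite.symm ω)
      ((∑ σ : Equiv.Perm (Fin n),
          (Equiv.Perm.sign σ : ℤ) •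
            ∏ p ∈ flagPairs n,
              fFactor n (n * (n - 1) / 2)
                (MvPolynomial.X (σ p.1) - MvPolynomial.X (σ p.2))).coeff
        (n * (n - 1) / 2)) = 0 :=
  s_omega_flag_vanishes_even_support_general n hn ω heven
end

section
/- Let F be a field of characteristic zero, let x_1, x_2, x_3, x_4 be pairwise distinct elements of F, let a_1, a_2, a_3, a_4 ∈ F, and set f(s) = 1 + a_1 s + a_2 s² + a_3 s³ + a_4 s⁴. Then the coefficient of t⁴ in the polynomial Σ_{S ⊆ {1,2,3,4}, |S| = 2} Π_{i ∈ S, j ∉ S} f(t(x_i − x_j)) / (x_i − x_j) ∈ F[t] equals 2(3a_1⁴ + 12a_1²a_2 + 7a_2² + 2a_1a_3 − 10a_4). (This computes the complex cobordism class of the Grassmannian G_{4,2} = U(4)/(U(2)×U(2)) with its invariant complex structure, whose six fixed points are indexed by the 2-element subsets S, with weights x_i − x_j for i ∈ S, j ∉ S.) -/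
/-!
Atiyah–Bott localization on `G(2,4)`. At a fixed point with tangent weights `w₁, …, w₄`, the
`t⁴`-coefficient of `∏ f(t wₖ)` is `∑_λ a_λ m_λ(w)` over the partitions `λ` of `4`, where
`a_λ = ∏ a_{λᵢ}` and `m_λ` is the monomial symmetric polynomial. Dividing by the Euler class
`w₁w₂w₃w₄` and summing over the six fixed points turns each `m_λ` into a constant, the
characteristic numbers `-20, 4, 14, 24, 6` of `G(2,4)` for `λ = 4, 31, 22, 211, 1111`; each of
these is a polynomial identity once the Vandermonde denominator is cleared.
-/

open Polynomial Finset

section MonomialSymmetric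

variable {R : Type*} [CommRing R]

def msymm₄ (c₁ c₂ c₃ c₄ : R) : R := c₁ ^ 4 + c₂ ^ 4 + c₃ ^ 4 + c₄ ^ 4

def msymm₃₁ (c₁ c₂ c₃ c₄ : R) : R :=
  c₁ ^ 3 * (c₂ + c₃ + c₄) + c₂ ^ 3 * (c₁ + c₃ + c₄) + c₃ ^ 3 * (c₁ + c₂ + c₄) +
    c₄ ^ 3 * (c₁ + c₂ + c₃)

def msymm₂₂ (c₁ c₂ c₃ c₄ : R) : R :=
  (c₁ * c₂) ^ 2 + (c₁ * c₃) ^ 2 + (c₁ * c₄) ^ 2 + (c₂ * c₃) ^ 2 + (c₂ * c₄) ^ 2 + (c₃ * c₄) ^ 2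

def msymm₂₁₁ (c₁ c₂ c₃ c₄ : R) : R :=
  c₁ ^ 2 * (c₂ * c₃ + c₂ * c₄ + c₃ * c₄) + c₂ ^ 2 * (c₁ * c₃ + c₁ * c₄ + c₃ * c₄) +
    c₃ ^ 2 * (c₁ * c₂ + c₁ * c₄ + c₂ * c₄) + c₄ ^ 2 * (c₁ * c₂ + c₁ * c₃ + c₂ * c₃)

def msymm₁₁₁₁ (c₁ c₂ c₃ c₄ : R) : R := c₁ * c₂ * c₃ * c₄

def genusCoeff (a₁ a₂ a₃ a₄ c₁ c₂ c₃ c₄ : R) : R :=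
  a₄ * msymm₄ c₁ c₂ c₃ c₄ + a₁ * a₃ * msymm₃₁ c₁ c₂ c₃ c₄ + a₂ ^ 2 * msymm₂₂ c₁ c₂ c₃ c₄ +
    a₁ ^ 2 * a₂ * msymm₂₁₁ c₁ c₂ c₃ c₄ + a₁ ^ 4 * msymm₁₁₁₁ c₁ c₂ c₃ c₄

theorem coeff_four_mul_eq_genusCoeff {a₁ a₂ a₃ a₄ : R} {f : R → R[X]}
    (hf : ∀ c : R, f c = 1 + C (a₁ * c) * X + C (a₂ * c ^ 2) * X ^ 2 +
      C (a₃ * c ^ 3) * X ^ 3 + C (a₄ * c ^ 4) * X ^ 4) (c₁ c₂ c₃ c₄ : R) :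
    (f c₁ * f c₂ * (f c₃ * f c₄)).coeff 4 = genusCoeff a₁ a₂ a₃ a₄ c₁ c₂ c₃ c₄ := by
  have hcoeff : ∀ c, (f c).coeff 0 = 1 ∧ (f c).coeff 1 = a₁ * c ∧ (f c).coeff 2 = a₂ * c ^ 2 ∧
      (f c).coeff 3 = a₃ * c ^ 3 ∧ (f c).coeff 4 = a₄ * c ^ 4 := fun c => by
    simp only [hf, coeff_add, coeff_one, coeff_C_mul_X_pow, coeff_C_mul_X]
    norm_num
  simp only [coeff_mul, Nat.sum_antidiagonal_eq_sum_range_succ_mk, sum_range_succ, sum_range_zero,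
    zero_add, Nat.reduceSub, Nat.sub_zero, Nat.sub_self, hcoeff]
  simp only [genusCoeff, msymm₄, msymm₃₁, msymm₂₂, msymm₂₁₁, msymm₁₁₁₁]
  ring

end MonomialSymmetric

theorem sum_powersetCard_two_fin_four {M : Type*} [AddCommMonoid M]
    (φ : Finset (Fin 4) → Finset (Fin 4) → M) :
    ∑ S ∈ powersetCard 2 (univ : Finset (Fin 4)), φ S Sᶜ =
      φ {0, 1} {2, 3} + φ {0, 2} {1, 3} + φ {0, 3} {1, 2} + φ {1, 2} {0, 3} + φ {1, 3} {0, 2} +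
        φ {2, 3} {0, 1} := by
  rw [show powersetCard 2 (univ : Finset (Fin 4)) =
    {{0, 1}, {0, 2}, {0, 3}, {1, 2}, {1, 3}, {2, 3}} by decide]
  simp (disch := decide) only [sum_insert, sum_singleton, ← add_assoc]
  congr 7

section Localization

variable {F : Type*} [Field F]

/-- The contribution of the fixed point `{i, j}` with complement `{k, l}`; its weights are listed
in the order in which `Finset.prod_pair` unfolds `∏ p ∈ {i, j}, ∏ q ∈ {k, l}`. -/
def fixedPointTerm (x : Fin 4 → F) (φ : F → F → F → F → F) (i j k l : Fin 4) : F :=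
  ((x i - x k) * (x i - x l) * ((x j - x k) * (x j - x l)))⁻¹ *
    φ (x i - x k) (x i - x l) (x j - x k) (x j - x l)

def fixedPointSum (x : Fin 4 → F) (φ : F → F → F → F → F) : F :=
  fixedPointTerm x φ 0 1 2 3 + fixedPointTerm x φ 0 2 1 3 + fixedPointTerm x φ 0 3 1 2 +
    fixedPointTerm x φ 1 2 0 3 + fixedPointTerm x φ 1 3 0 2 + fixedPointTerm x φ 2 3 0 1

theorem coeff_four_eq_fixedPointTerm {a₁ a₂ a₃ a₄ : F} {f : F → F[X]}
    (hf : ∀ c : F, f c = 1 + C (a₁ * c) * X + C (a₂ * c ^ 2) * X ^ 2 +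
      C (a₃ * c ^ 3) * X ^ 3 + C (a₄ * c ^ 4) * X ^ 4)
    (x : Fin 4 → F) {i j k l : Fin 4} (hij : i ≠ j) (hkl : k ≠ l) :
    (C (∏ p ∈ {i, j}, ∏ q ∈ {k, l}, (x p - x q))⁻¹ *
        ∏ p ∈ {i, j}, ∏ q ∈ {k, l}, f (x p - x q)).coeff 4 =
      fixedPointTerm x (genusCoeff a₁ a₂ a₃ a₄) i j k l := by
  simp only [prod_pair hij, prod_pair hkl, coeff_C_mul, coeff_four_mul_eq_genusCoeff hf,
    fixedPointTerm]

theorem fixedPointSum_genusCoeff (x : Fin 4 → F) (a₁ a₂ a₃ a₄ : F) :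
    fixedPointSum x (genusCoeff a₁ a₂ a₃ a₄) =
      a₄ * fixedPointSum x msymm₄ + a₁ * a₃ * fixedPointSum x msymm₃₁ +
        a₂ ^ 2 * fixedPointSum x msymm₂₂ + a₁ ^ 2 * a₂ * fixedPointSum x msymm₂₁₁ +
        a₁ ^ 4 * fixedPointSum x msymm₁₁₁₁ := by
  simp only [fixedPointSum, fixedPointTerm, genusCoeff]
  ring

/-- The coefficient `±(x j - x i) * (x l - x k)` of the fixed point `{i, j}` is the Vandermonde
product divided by its Euler class. -/
theorem fixedPointSum_eq {x : Fin 4 → F} (hx : Function.Injective x) {φ : F → F → F → F → F}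
    {r : F}
    (h : (x 1 - x 0) * (x 3 - x 2) * φ (x 0 - x 2) (x 0 - x 3) (x 1 - x 2) (x 1 - x 3) -
        (x 2 - x 0) * (x 3 - x 1) * φ (x 0 - x 1) (x 0 - x 3) (x 2 - x 1) (x 2 - x 3) +
        (x 3 - x 0) * (x 2 - x 1) * φ (x 0 - x 1) (x 0 - x 2) (x 3 - x 1) (x 3 - x 2) +
        (x 2 - x 1) * (x 3 - x 0) * φ (x 1 - x 0) (x 1 - x 3) (x 2 - x 0) (x 2 - x 3) -
        (x 3 - x 1) * (x 2 - x 0) * φ (x 1 - x 0) (x 1 - x 2) (x 3 - x 0) (x 3 - x 2) +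
        (x 3 - x 2) * (x 1 - x 0) * φ (x 2 - x 0) (x 2 - x 1) (x 3 - x 0) (x 3 - x 1) =
      r * ((x 1 - x 0) * (x 2 - x 0) * (x 3 - x 0) * (x 2 - x 1) * (x 3 - x 1) * (x 3 - x 2))) :
    fixedPointSum x φ = r := by
  have hne : ∀ {a b : Fin 4}, a ≠ b → x a - x b ≠ 0 := fun hab => sub_ne_zero.2 (hx.ne hab)
  have hV :
      (x 1 - x 0) * (x 2 - x 0) * (x 3 - x 0) * (x 2 - x 1) * (x 3 - x 1) * (x 3 - x 2) ≠ 0 := by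
    simp [sub_eq_zero, hx.eq_iff]
  rw [← mul_left_inj' hV, ← h]
  unfold fixedPointSum fixedPointTerm
  field_simp [hne]
  ring

variable {x : Fin 4 → F}

theorem fixedPointSum_msymm₄ (hx : Function.Injective x) :
    fixedPointSum x msymm₄ = -20 :=
  fixedPointSum_eq hx (by simp only [msymm₄]; ring)

theorem fixedPointSum_msymm₃₁ (hx : Function.Injective x) :
    fixedPointSum x msymm₃₁ = 4 :=
  fixedPointSum_eq hx (by simp only [msymm₃₁]; ring)

theorem fixedPointSum_msymm₂₂ (hx : Function.Injective x) :
    fixedPointSum x msymm₂₂ = 14 :=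
  fixedPointSum_eq hx (by simp only [msymm₂₂]; ring)

theorem fixedPointSum_msymm₂₁₁ (hx : Function.Injective x) :
    fixedPointSum x msymm₂₁₁ = 24 :=
  fixedPointSum_eq hx (by simp only [msymm₂₁₁]; ring)

theorem fixedPointSum_msymm₁₁₁₁ (hx : Function.Injective x) :
    fixedPointSum x msymm₁₁₁₁ = 6 :=
  fixedPointSum_eq hx (by simp only [msymm₁₁₁₁]; ring)

end Localization

theorem cobordism_class_grassmannian_G42_general {F : Type*} [Field F]
    (x : Fin 4 → F) (hx : Function.Injective x) (a₁ a₂ a₃ a₄ : F) (f : F → F[X])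
    (hf : ∀ c : F, f c = 1 + C (a₁ * c) * X + C (a₂ * c ^ 2) * X ^ 2 +
      C (a₃ * c ^ 3) * X ^ 3 + C (a₄ * c ^ 4) * X ^ 4) :
    (∑ S ∈ Finset.powersetCard 2 (Finset.univ : Finset (Fin 4)),
        C ((∏ i ∈ S, ∏ j ∈ Sᶜ, (x i - x j))⁻¹) * ∏ i ∈ S, ∏ j ∈ Sᶜ, f (x i - x j)).coeff 4 =
      2 * (3 * a₁ ^ 4 + 12 * a₁ ^ 2 * a₂ + 7 * a₂ ^ 2 + 2 * a₁ * a₃ - 10 * a₄) := by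
  rw [sum_powersetCard_two_fin_four
    (fun S T => C (∏ i ∈ S, ∏ j ∈ T, (x i - x j))⁻¹ * ∏ i ∈ S, ∏ j ∈ T, f (x i - x j))]
  simp (disch := decide) only [coeff_add, coeff_four_eq_fixedPointTerm hf]
  rw [← fixedPointSum, fixedPointSum_genusCoeff, fixedPointSum_msymm₄ hx, fixedPointSum_msymm₃₁ hx,
    fixedPointSum_msymm₂₂ hx, fixedPointSum_msymm₂₁₁ hx, fixedPointSum_msymm₁₁₁₁ hx]
  ring

/-- Cobordism class of the Grassmannian `G₄,₂ = U(4)/(U(2)×U(2))`: with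
`f(s) = 1 + a₁s + a₂s² + a₃s³ + a₄s⁴` and pairwise distinct `x₁,…,x₄`, the coefficient
of `t⁴` in `Σ_{|S|=2} Π_{i∈S, j∉S} f(t(xᵢ−xⱼ))/(xᵢ−xⱼ)` equals
`2(3a₁⁴ + 12a₁²a₂ + 7a₂² + 2a₁a₃ − 10a₄)`. -/
theorem cobordism_class_grassmannian_G42 {F : Type*} [Field F] [CharZero F]
    (x : Fin 4 → F) (hx : Function.Injective x) (a₁ a₂ a₃ a₄ : F) (f : F → F[X])
    (hf : ∀ c : F, f c = 1 + C (a₁ * c) * X + C (a₂ * c ^ 2) * X ^ 2 +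
      C (a₃ * c ^ 3) * X ^ 3 + C (a₄ * c ^ 4) * X ^ 4) :
    (∑ S ∈ Finset.powersetCard 2 (Finset.univ : Finset (Fin 4)),
        C ((∏ i ∈ S, ∏ j ∈ Sᶜ, (x i - x j))⁻¹) * ∏ i ∈ S, ∏ j ∈ Sᶜ, f (x i - x j)).coeff 4 =
      2 * (3 * a₁ ^ 4 + 12 * a₁ ^ 2 * a₂ + 7 * a₂ ^ 2 + 2 * a₁ * a₃ - 10 * a₄) :=
  cobordism_class_grassmannian_G42_general x hx a₁ a₂ a₃ a₄ f hf
end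

section
/- Let F be a field of characteristic zero and let x_1, x_2, x_3, x_4 be pairwise distinct elements of F. Then Σ_{S ⊆ {1,2,3,4}, |S| = 2} ( Σ_{i ∈ S, j ∉ S} (x_i − x_j)⁴ ) / ( Π_{i ∈ S, j ∉ S} (x_i − x_j) ) = −20. (Equivalently, the characteristic number s_4(G_{4,2}) of the Grassmannian G_{4,2} = U(4)/(U(2)×U(2)) equals −20.) -/
private theorem flipQ {F : Type*} [Field F] (a b c d : F) :
    ((c-a)^4+(c-b)^4+((d-a)^4+(d-b)^4)) / (((c-a)*(c-b))*((d-a)*(d-b)))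
      = ((a-c)^4+(a-d)^4+((b-c)^4+(b-d)^4)) / (((a-c)*(a-d))*((b-c)*(b-d))) := by
  rw [show (((c-a)*(c-b))*((d-a)*(d-b))) = (((a-c)*(a-d))*((b-c)*(b-d))) from by ring,
    show ((c-a)^4+(c-b)^4+((d-a)^4+(d-b)^4))
      = ((a-c)^4+(a-d)^4+((b-c)^4+(b-d)^4)) from by ring]

set_option maxHeartbeats 1000000 in
private theorem key3 {F : Type*} [Field F] [CharZero F] (a b c d : F)
    (hab : a-b≠0)(hac : a-c≠0)(had : a-d≠0)(hbc : b-c≠0)(hbd : b-d≠0)(hcd : c-d≠0) :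
    ((a-c)^4+(a-d)^4+((b-c)^4+(b-d)^4)) / (((a-c)*(a-d))*((b-c)*(b-d)))
  + ((a-b)^4+(a-d)^4+((c-b)^4+(c-d)^4)) / (((a-b)*(a-d))*((c-b)*(c-d)))
  + ((a-b)^4+(a-c)^4+((d-b)^4+(d-c)^4)) / (((a-b)*(a-c))*((d-b)*(d-c))) = -10 := by
  have hcb : c-b≠0 := fun h => hbc (by linear_combination -h)
  have hdb : d-b≠0 := fun h => hbd (by linear_combination -h)
  have hdc : d-c≠0 := fun h => hcd (by linear_combination -h)
  have hD1 : ((a-c)*(a-d))*((b-c)*(b-d)) ≠ 0 :=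
    mul_ne_zero (mul_ne_zero hac had) (mul_ne_zero hbc hbd)
  have hD2 : ((a-b)*(a-d))*((c-b)*(c-d)) ≠ 0 :=
    mul_ne_zero (mul_ne_zero hab had) (mul_ne_zero hcb hcd)
  have hD3 : ((a-b)*(a-c))*((d-b)*(d-c)) ≠ 0 :=
    mul_ne_zero (mul_ne_zero hab hac) (mul_ne_zero hdb hdc)
  rw [div_add_div _ _ hD1 hD2, div_add_div _ _ (mul_ne_zero hD1 hD2) hD3,
    div_eq_iff (mul_ne_zero (mul_ne_zero hD1 hD2) hD3)]
  ring

set_option maxHeartbeats 1000000 in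
private theorem key6 {F : Type*} [Field F] [CharZero F] (a b c d : F)
    (hab : a-b≠0)(hac : a-c≠0)(had : a-d≠0)(hbc : b-c≠0)(hbd : b-d≠0)(hcd : c-d≠0) :
    ((a-c)^4+(a-d)^4+((b-c)^4+(b-d)^4)) / (((a-c)*(a-d))*((b-c)*(b-d)))
  + ((a-b)^4+(a-d)^4+((c-b)^4+(c-d)^4)) / (((a-b)*(a-d))*((c-b)*(c-d)))
  + ((a-b)^4+(a-c)^4+((d-b)^4+(d-c)^4)) / (((a-b)*(a-c))*((d-b)*(d-c)))
  + ((b-a)^4+(b-d)^4+((c-a)^4+(c-d)^4)) / (((b-a)*(b-d))*((c-a)*(c-d)))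
  + ((b-a)^4+(b-c)^4+((d-a)^4+(d-c)^4)) / (((b-a)*(b-c))*((d-a)*(d-c)))
  + ((c-a)^4+(c-b)^4+((d-a)^4+(d-b)^4)) / (((c-a)*(c-b))*((d-a)*(d-b))) = -20 := by
  have f1 := flipQ a b c d
  have f2 := flipQ a c b d
  have f3 := flipQ a d b c
  have k3 := key3 a b c d hab hac had hbc hbd hcd
  linear_combination 2 * k3 + f1 + f2 + f3

set_option maxHeartbeats 1000000 in
/-- `s₄(G₄,₂) = −20` by localization: for pairwise distinct `x₁,…,x₄` in a
field of characteristic zero,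
`Σ_{|S|=2} (Σ_{i∈S, j∉S} (xᵢ−xⱼ)⁴) / (Π_{i∈S, j∉S} (xᵢ−xⱼ)) = −20`. -/
theorem s_four_grassmannian_G42 {F : Type*} [Field F] [CharZero F]
    (x : Fin 4 → F) (hx : Function.Injective x) :
    ∑ S ∈ Finset.powersetCard 2 (Finset.univ : Finset (Fin 4)),
        (∑ i ∈ S, ∑ j ∈ Sᶜ, (x i - x j) ^ 4) / (∏ i ∈ S, ∏ j ∈ Sᶜ, (x i - x j)) =
      (-20 : F) := by
  have h01 : x 0 - x 1 ≠ 0 := sub_ne_zero.2 (fun h => by simpa using hx h)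
  have h02 : x 0 - x 2 ≠ 0 := sub_ne_zero.2 (fun h => by simpa using hx h)
  have h03 : x 0 - x 3 ≠ 0 := sub_ne_zero.2 (fun h => by simpa using hx h)
  have h12 : x 1 - x 2 ≠ 0 := sub_ne_zero.2 (fun h => by simpa using hx h)
  have h13 : x 1 - x 3 ≠ 0 := sub_ne_zero.2 (fun h => by simpa using hx h)
  have h23 : x 2 - x 3 ≠ 0 := sub_ne_zero.2 (fun h => by simpa using hx h)
  have hset : Finset.powersetCard 2 (Finset.univ : Finset (Fin 4)) =
      {{0,1},{0,2},{0,3},{1,2},{1,3},{2,3}} := by decide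
  rw [hset]
  have c01 : (({0,1} : Finset (Fin 4))ᶜ) = {2,3} := by decide
  have c02 : (({0,2} : Finset (Fin 4))ᶜ) = {1,3} := by decide
  have c03 : (({0,3} : Finset (Fin 4))ᶜ) = {1,2} := by decide
  have c12 : (({1,2} : Finset (Fin 4))ᶜ) = {0,3} := by decide
  have c13 : (({1,3} : Finset (Fin 4))ᶜ) = {0,2} := by decide
  have c23 : (({2,3} : Finset (Fin 4))ᶜ) = {0,1} := by decide
  repeat
    first
      | rw [Finset.sum_insert (by decide)]
      | rw [Finset.prod_insert (by decide)]
      | simp only [c01, c02, c03, c12, c13, c23, Finset.sum_singleton,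
          Finset.prod_singleton]
  linear_combination key6 (x 0) (x 1) (x 2) (x 3) h01 h02 h03 h12 h13 h23
end

section
/- Let F be a field of characteristic zero, let q, l ≥ 1, set n = q + l, let x_1, …, x_n be pairwise distinct elements of F, and let f(s) = 1 + Σ_{i=1}^{N} a_i s^i with a_1, …, a_N ∈ F. Then in F[t] one has: Σ_{S ⊆ {1,…,n}, |S| = q} Π_{i ∈ S, j ∉ S} f(t(x_i − x_j)) / (x_i − x_j) = (1/(q!·l!·Δ_n)) · Σ_{σ ∈ S_n} sgn(σ) · (Π_{1≤i<j≤q} (x_{σ(i)} − x_{σ(j)})) · (Π_{q+1≤i<j≤n} (x_{σ(i)} − x_{σ(j)})) · Π_{1≤i≤q<j≤n} f(t(x_{σ(i)} − x_{σ(j)})). (This expresses the localization formula for the cobordism class of the Grassmannian G_{q+l,l}: the class is the coefficient of t^{lq} in either side, the right side being (1/(q!l!)) L(Δ_q Δ_{q+1,q+l} Π f(t(x_i − x_j))).) -/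
open Polynomial

section helpers

variable {n q : ℕ} {M : Type*} [CommMonoid M]

lemma prod_pairs_eq (h : Fin n → Fin n → M) :
    ∏ p ∈ Finset.univ.filter (fun p : Fin n × Fin n => p.1 < p.2), h p.1 p.2
      = ∏ i : Fin n, ∏ j ∈ Finset.Ioi i, h i j := by
  rw [Finset.prod_sigma']
  apply Finset.prod_nbij' (fun p : Fin n × Fin n => (⟨p.1, p.2⟩ : Σ _ : Fin n, Fin n))
    (fun s : Σ _ : Fin n, Fin n => (s.1, s.2)) <;>
    simp [Finset.mem_sigma]

lemma vander {F : Type*} [Field F] (x : Fin n → F) (σ : Equiv.Perm (Fin n)) :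
    ∏ p ∈ Finset.univ.filter (fun p : Fin n × Fin n => p.1 < p.2), (x (σ p.1) - x (σ p.2))
      = ((Equiv.Perm.sign σ : ℤ) : F) *
        ∏ p ∈ Finset.univ.filter (fun p : Fin n × Fin n => p.1 < p.2), (x p.1 - x p.2) := by
  rw [prod_pairs_eq (fun i j => x (σ i) - x (σ j)), prod_pairs_eq (fun i j => x i - x j)]
  have flip : ∀ y : Fin n → F, ∏ i : Fin n, ∏ j ∈ Finset.Ioi i, (y i - y j)
      = (∏ i : Fin n, (-1 : F) ^ (Finset.Ioi i).card) *
        ∏ i : Fin n, ∏ j ∈ Finset.Ioi i, (y j - y i) := by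
    intro y
    rw [← Finset.prod_mul_distrib]
    refine Finset.prod_congr rfl fun i _ => ?_
    rw [← Finset.prod_const, ← Finset.prod_mul_distrib]
    exact Finset.prod_congr rfl fun j _ => by ring
  rw [flip (fun i => x (σ i)), flip x, ← Matrix.det_vandermonde, ← Matrix.det_vandermonde]
  have hperm : Matrix.vandermonde (fun i => x (σ i)) =
      (Matrix.vandermonde x).submatrix σ id := rfl
  rw [hperm, Matrix.det_permute]
  ring

lemma partition3 (q : ℕ) (h : Fin n × Fin n → M) :
    ∏ p ∈ Finset.univ.filter (fun p : Fin n × Fin n => p.1 < p.2), h p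
      = (∏ p ∈ Finset.univ.filter (fun p : Fin n × Fin n => p.1 < p.2 ∧ p.2.1 < q), h p)
        * (∏ p ∈ Finset.univ.filter (fun p : Fin n × Fin n => p.1 < p.2 ∧ q ≤ p.1.1), h p)
        * (∏ p ∈ Finset.univ.filter (fun p : Fin n × Fin n => p.1.1 < q ∧ q ≤ p.2.1), h p) := by
  rw [← Finset.prod_filter_mul_prod_filter_not
        (Finset.univ.filter (fun p : Fin n × Fin n => p.1 < p.2)) (fun p => p.2.1 < q) h,
      ← Finset.prod_filter_mul_prod_filter_not
        ((Finset.univ.filter (fun p : Fin n × Fin n => p.1 < p.2)).filter (fun p => ¬ p.2.1 < q))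
        (fun p => q ≤ p.1.1) h,
      ← mul_assoc]
  congr 1
  · congr 1
    · refine Finset.prod_congr ?_ fun _ _ => rfl
      ext p
      simp only [Finset.mem_filter, Finset.mem_univ, true_and, Fin.lt_def]
      try omega
    · refine Finset.prod_congr ?_ fun _ _ => rfl
      ext p
      simp only [Finset.mem_filter, Finset.mem_univ, true_and, Fin.lt_def]
      omega
  · refine Finset.prod_congr ?_ fun _ _ => rfl
    ext p
    simp only [Finset.mem_filter, Finset.mem_univ, true_and, Fin.lt_def]
    omega

lemma rect (σ : Equiv.Perm (Fin n)) (S : Finset (Fin n))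
    (hσ : Finset.image σ (Finset.univ.filter fun i : Fin n => i.1 < q) = S)
    (h : Fin n → Fin n → M) :
    ∏ p ∈ Finset.univ.filter (fun p : Fin n × Fin n => p.1.1 < q ∧ q ≤ p.2.1),
        h (σ p.1) (σ p.2)
      = ∏ i ∈ S, ∏ j ∈ Sᶜ, h i j := by
  have hmem : ∀ a : Fin n, σ a ∈ S ↔ a.1 < q := by
    intro a
    rw [← hσ, Finset.mem_image]
    constructor
    · rintro ⟨b, hb, hba⟩
      rw [← σ.injective hba]
      exact (Finset.mem_filter.1 hb).2
    · intro ha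
      exact ⟨a, Finset.mem_filter.2 ⟨Finset.mem_univ _, ha⟩, rfl⟩
  rw [← Finset.prod_product' S Sᶜ h]
  apply Finset.prod_nbij' (fun p : Fin n × Fin n => (σ p.1, σ p.2))
    (fun r : Fin n × Fin n => (σ.symm r.1, σ.symm r.2))
  · intro p hp
    simp only [Finset.mem_filter, Finset.mem_univ, true_and] at hp
    simp only [Finset.mem_product, Finset.mem_compl, hmem]
    omega
  · intro r hr
    simp only [Finset.mem_product, Finset.mem_compl] at hr
    have h1 : σ (σ.symm r.1) ∈ S := by rw [Equiv.apply_symm_apply]; exact hr.1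
    have h2 : ¬ σ (σ.symm r.2) ∈ S := by rw [Equiv.apply_symm_apply]; exact hr.2
    rw [hmem] at h1 h2
    simp only [Finset.mem_filter, Finset.mem_univ, true_and]
    omega
  · intro p _; simp
  · intro r _; simp
  · intro p _; rfl

end helpers

section glue

variable {α : Type*} [Fintype α] [DecidableEq α]

def glue (T S : Finset α) (e₁ : ↥T ≃ ↥S) (e₂ : ↥Tᶜ ≃ ↥Sᶜ) : Equiv.Perm α where
  toFun a :=
    if h : a ∈ T then (e₁ ⟨a, h⟩ : α) else (e₂ ⟨a, Finset.mem_compl.2 h⟩ : α)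
  invFun b :=
    if h : b ∈ S then (e₁.symm ⟨b, h⟩ : α) else (e₂.symm ⟨b, Finset.mem_compl.2 h⟩ : α)
  left_inv := by
    intro a
    dsimp only
    by_cases h : a ∈ T
    · rw [dif_pos h, dif_pos (e₁ ⟨a, h⟩).2]
      simp
    · have hc : (↑(e₂ ⟨a, Finset.mem_compl.2 h⟩) : α) ∉ S :=
        Finset.mem_compl.1 (e₂ ⟨a, Finset.mem_compl.2 h⟩).2
      rw [dif_neg h, dif_neg hc]
      simp
  right_inv := by
    intro b
    dsimp only
    by_cases h : b ∈ S
    · rw [dif_pos h, dif_pos (e₁.symm ⟨b, h⟩).2]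
      simp
    · have hc : (↑(e₂.symm ⟨b, Finset.mem_compl.2 h⟩) : α) ∉ T :=
        Finset.mem_compl.1 (e₂.symm ⟨b, Finset.mem_compl.2 h⟩).2
      rw [dif_neg h, dif_neg hc]
      simp

lemma glue_apply_mem (T S : Finset α) (e₁ : ↥T ≃ ↥S) (e₂ : ↥Tᶜ ≃ ↥Sᶜ) (a : α) (h : a ∈ T) :
    glue T S e₁ e₂ a = ↑(e₁ ⟨a, h⟩) := by
  show (if h : a ∈ T then (e₁ ⟨a, h⟩ : α) else (e₂ ⟨a, Finset.mem_compl.2 h⟩ : α)) = _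
  rw [dif_pos h]

lemma glue_apply_not_mem (T S : Finset α) (e₁ : ↥T ≃ ↥S) (e₂ : ↥Tᶜ ≃ ↥Sᶜ) (a : α) (h : ¬ a ∈ T) :
    glue T S e₁ e₂ a = ↑(e₂ ⟨a, Finset.mem_compl.2 h⟩) := by
  show (if h : a ∈ T then (e₁ ⟨a, h⟩ : α) else (e₂ ⟨a, Finset.mem_compl.2 h⟩ : α)) = _
  rw [dif_neg h]

lemma card_fiber (T S : Finset α) (hcard : S.card = T.card) :
    (Finset.univ.filter (fun σ : Equiv.Perm α => Finset.image σ T = S)).card =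
      T.card.factorial * Tᶜ.card.factorial := by
  have hccard : Sᶜ.card = Tᶜ.card := by
    rw [Finset.card_compl, Finset.card_compl, hcard]
  have hmem : ∀ (σ : Equiv.Perm α), Finset.image (⇑σ) T = S → ∀ a : α, a ∈ T ↔ σ a ∈ S := by
    intro σ hσ a
    rw [← hσ, Finset.mem_image]
    constructor
    · intro ha; exact ⟨a, ha, rfl⟩
    · rintro ⟨b, hb, hba⟩
      rwa [← σ.injective hba]
  have hmemc : ∀ (σ : Equiv.Perm α), Finset.image (⇑σ) T = S → ∀ a : α, a ∈ Tᶜ ↔ σ a ∈ Sᶜ := by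
    intro σ hσ a
    rw [Finset.mem_compl, Finset.mem_compl, not_iff_not]
    exact hmem σ hσ a
  have key : (Finset.univ.filter (fun σ : Equiv.Perm α => Finset.image σ T = S)).card =
      (Finset.univ : Finset ((↥T ≃ ↥S) × (↥Tᶜ ≃ ↥Sᶜ))).card := by
    refine Finset.card_bij'
      (fun σ hσ =>
        (Equiv.subtypeEquiv σ (hmem σ (by simpa using hσ)),
         Equiv.subtypeEquiv σ (hmemc σ (by simpa using hσ))))
      (fun e _ => glue T S e.1 e.2) (fun σ hσ => Finset.mem_univ _) ?_ ?_ ?_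
    · intro e _
      simp only [Finset.mem_filter, Finset.mem_univ, true_and]
      have hsub : Finset.image (⇑(glue T S e.1 e.2)) T ⊆ S := by
        intro b hb
        rw [Finset.mem_image] at hb
        obtain ⟨a, ha, rfl⟩ := hb
        rw [glue_apply_mem T S e.1 e.2 a ha]
        exact (e.1 ⟨a, ha⟩).2
      apply Finset.eq_of_subset_of_card_le hsub
      rw [Finset.card_image_of_injective _ (glue T S e.1 e.2).injective, hcard]
    · intro σ hσ
      ext a
      by_cases h : a ∈ T
      · rw [glue_apply_mem T S _ _ a h]
        rfl
      · rw [glue_apply_not_mem T S _ _ a h]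
        rfl
    · intro e he
      refine Prod.ext ?_ ?_
      · ext a
        show (glue T S e.1 e.2) (a : α) = ((e.1 a : α))
        rw [glue_apply_mem T S e.1 e.2 a a.2]
      · ext a
        show (glue T S e.1 e.2) (a : α) = ((e.2 a : α))
        rw [glue_apply_not_mem T S e.1 e.2 a (Finset.mem_compl.1 a.2)]
  rw [key, Finset.card_univ, Fintype.card_prod,
    Fintype.card_equiv (Finset.equivOfCardEq hcard.symm),
    Fintype.card_equiv (Finset.equivOfCardEq hccard.symm),
    Fintype.card_coe, Fintype.card_coe]

end glue
lemma card_T0 (q l : ℕ) :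
    (Finset.univ.filter (fun i : Fin (q + l) => i.1 < q)).card = q := by
  have h : (Finset.univ.filter (fun i : Fin (q + l) => i.1 < q))
      = Finset.map (Fin.castAddEmb l) Finset.univ := by
    ext i
    simp only [Finset.mem_filter, Finset.mem_univ, true_and, Finset.mem_map]
    constructor
    · intro hi
      exact ⟨⟨i.1, hi⟩, by simp [Fin.castAddEmb, Fin.castLEEmb, Fin.ext_iff]⟩
    · rintro ⟨a, rfl⟩
      simpa [Fin.castAddEmb, Fin.castLEEmb] using a.2
  rw [h, Finset.card_map, Finset.card_univ, Fintype.card_fin]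


/-- Localization formula for the cobordism class of the Grassmannian
`G_{q+l,l}`: in `F[t]`,
`Σ_{|S|=q} Π_{i∈S, j∉S} f(t(xᵢ−xⱼ))/(xᵢ−xⱼ)
 = (1/(q!·l!·Δₙ)) Σ_σ sgn(σ) Δ_q(σ) Δ_{q+1,q+l}(σ) Π_{i≤q<j} f(t(x_{σ(i)}−x_{σ(j)}))`. -/
theorem cobordism_class_grassmannian {F : Type*} [Field F] [CharZero F]
    (q l : ℕ) (hq : 1 ≤ q) (hl : 1 ≤ l)
    (x : Fin (q + l) → F) (hx : Function.Injective x)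
    (N : ℕ) (a : Fin N → F) (f : F → F[X])
    (hf : ∀ c : F, f c = 1 + ∑ k : Fin N, C (a k * c ^ (k.1 + 1)) * X ^ (k.1 + 1)) :
    ∑ S ∈ Finset.powersetCard q (Finset.univ : Finset (Fin (q + l))),
        ∏ i ∈ S, ∏ j ∈ Sᶜ, (C ((x i - x j)⁻¹) * f (x i - x j)) =
      C ((((q.factorial * l.factorial : ℕ) : F) *
            ∏ p ∈ Finset.univ.filter (fun p : Fin (q + l) × Fin (q + l) => p.1 < p.2),
              (x p.1 - x p.2))⁻¹) *
        ∑ σ : Equiv.Perm (Fin (q + l)),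
          C (((Equiv.Perm.sign σ : ℤ) : F) *
              (∏ p ∈ Finset.univ.filter
                  (fun p : Fin (q + l) × Fin (q + l) => p.1 < p.2 ∧ p.2.1 < q),
                (x (σ p.1) - x (σ p.2))) *
              ∏ p ∈ Finset.univ.filter
                  (fun p : Fin (q + l) × Fin (q + l) => p.1 < p.2 ∧ q ≤ p.1.1),
                (x (σ p.1) - x (σ p.2))) *
            ∏ p ∈ Finset.univ.filter
                (fun p : Fin (q + l) × Fin (q + l) => p.1.1 < q ∧ q ≤ p.2.1),
              f (x (σ p.1) - x (σ p.2)) := by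
  classical
  have hT0card : (Finset.univ.filter (fun i : Fin (q + l) => i.1 < q)).card = q := card_T0 q l
  have hT0ccard : ((Finset.univ.filter (fun i : Fin (q + l) => i.1 < q))ᶜ).card = l := by
    rw [Finset.card_compl, hT0card, Fintype.card_fin]
    omega
  have hΔ : (∏ p ∈ Finset.univ.filter (fun p : Fin (q + l) × Fin (q + l) => p.1 < p.2),
      (x p.1 - x p.2)) ≠ 0 := by
    rw [Finset.prod_ne_zero_iff]
    intro p hp
    simp only [Finset.mem_filter, Finset.mem_univ, true_and] at hp
    exact sub_ne_zero.2 fun e => absurd (hx e) (ne_of_lt hp)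
  have hK : (((q.factorial * l.factorial : ℕ) : F) *
      ∏ p ∈ Finset.univ.filter (fun p : Fin (q + l) × Fin (q + l) => p.1 < p.2),
        (x p.1 - x p.2)) ≠ 0 :=
    mul_ne_zero (Nat.cast_ne_zero.2 (Nat.mul_ne_zero q.factorial_ne_zero l.factorial_ne_zero)) hΔ
  refine mul_left_cancel₀ (Polynomial.C_ne_zero.mpr hK) ?_
  conv_rhs => rw [← mul_assoc, ← Polynomial.C_mul, mul_inv_cancel₀ hK, Polynomial.C_1, one_mul]
  rw [← Finset.sum_fiberwise_of_maps_to
    (g := fun σ : Equiv.Perm (Fin (q + l)) =>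
      Finset.image (⇑σ) (Finset.univ.filter (fun i : Fin (q + l) => i.1 < q)))
    (t := Finset.powersetCard q (Finset.univ : Finset (Fin (q + l))))
    (fun σ _ => Finset.mem_powersetCard.2 ⟨Finset.subset_univ _, by
      rw [Finset.card_image_of_injective _ σ.injective, hT0card]⟩) _]
  rw [Finset.mul_sum]
  refine Finset.sum_congr rfl fun S hS => ?_
  have hScard : S.card = q := (Finset.mem_powersetCard.1 hS).2
  have hM : (∏ i ∈ S, ∏ j ∈ Sᶜ, (x i - x j)) ≠ 0 := by
    rw [Finset.prod_ne_zero_iff]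
    intro i hi
    rw [Finset.prod_ne_zero_iff]
    intro j hj
    exact sub_ne_zero.2 fun e => (Finset.mem_compl.1 hj) (hx e ▸ hi)
  have hGsplit : ∏ i ∈ S, ∏ j ∈ Sᶜ, (C ((x i - x j)⁻¹) * f (x i - x j))
      = C ((∏ i ∈ S, ∏ j ∈ Sᶜ, (x i - x j))⁻¹) * ∏ i ∈ S, ∏ j ∈ Sᶜ, f (x i - x j) := by
    simp only [Finset.prod_mul_distrib, ← map_prod, Finset.prod_inv_distrib]
  have hfiber : ∀ σ ∈ Finset.univ.filter (fun σ : Equiv.Perm (Fin (q + l)) =>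
      Finset.image (⇑σ) (Finset.univ.filter (fun i : Fin (q + l) => i.1 < q)) = S),
      C (((Equiv.Perm.sign σ : ℤ) : F) *
          (∏ p ∈ Finset.univ.filter
              (fun p : Fin (q + l) × Fin (q + l) => p.1 < p.2 ∧ p.2.1 < q),
            (x (σ p.1) - x (σ p.2))) *
          ∏ p ∈ Finset.univ.filter
              (fun p : Fin (q + l) × Fin (q + l) => p.1 < p.2 ∧ q ≤ p.1.1),
            (x (σ p.1) - x (σ p.2))) *
        ∏ p ∈ Finset.univ.filter
            (fun p : Fin (q + l) × Fin (q + l) => p.1.1 < q ∧ q ≤ p.2.1),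
          f (x (σ p.1) - x (σ p.2))
      = C (∏ p ∈ Finset.univ.filter (fun p : Fin (q + l) × Fin (q + l) => p.1 < p.2),
            (x p.1 - x p.2)) *
        ∏ i ∈ S, ∏ j ∈ Sᶜ, (C ((x i - x j)⁻¹) * f (x i - x j)) := by
    intro σ hσ'
    have hσ : Finset.image (⇑σ) (Finset.univ.filter (fun i : Fin (q + l) => i.1 < q)) = S :=
      (Finset.mem_filter.1 hσ').2
    have hrectf := rect (q := q) σ S hσ (fun i j => f (x i - x j))
    have hrectx := rect (q := q) σ S hσ (fun i j => x i - x j)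
    have hpart := partition3 (n := q + l) q
      (fun p : Fin (q + l) × Fin (q + l) => x (σ p.1) - x (σ p.2))
    have hvan := vander x σ
    have hss : ((Equiv.Perm.sign σ : ℤ) : F) * ((Equiv.Perm.sign σ : ℤ) : F) = 1 := by
      rcases Int.units_eq_one_or (Equiv.Perm.sign σ) with h | h <;> rw [h] <;> norm_num
    have h4 : (∏ p ∈ Finset.univ.filter
          (fun p : Fin (q + l) × Fin (q + l) => p.1 < p.2 ∧ p.2.1 < q),
          (x (σ p.1) - x (σ p.2))) *
        (∏ p ∈ Finset.univ.filter
          (fun p : Fin (q + l) × Fin (q + l) => p.1 < p.2 ∧ q ≤ p.1.1),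
          (x (σ p.1) - x (σ p.2))) *
        (∏ i ∈ S, ∏ j ∈ Sᶜ, (x i - x j))
        = ((Equiv.Perm.sign σ : ℤ) : F) *
          ∏ p ∈ Finset.univ.filter (fun p : Fin (q + l) × Fin (q + l) => p.1 < p.2),
            (x p.1 - x p.2) := by
      rw [← hrectx, ← hpart]
      exact hvan
    have hscal : ((Equiv.Perm.sign σ : ℤ) : F) *
        (∏ p ∈ Finset.univ.filter
          (fun p : Fin (q + l) × Fin (q + l) => p.1 < p.2 ∧ p.2.1 < q),
          (x (σ p.1) - x (σ p.2))) *
        (∏ p ∈ Finset.univ.filter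
          (fun p : Fin (q + l) × Fin (q + l) => p.1 < p.2 ∧ q ≤ p.1.1),
          (x (σ p.1) - x (σ p.2)))
        = (∏ p ∈ Finset.univ.filter (fun p : Fin (q + l) × Fin (q + l) => p.1 < p.2),
            (x p.1 - x p.2)) * (∏ i ∈ S, ∏ j ∈ Sᶜ, (x i - x j))⁻¹ := by
      rw [eq_mul_inv_iff_mul_eq₀ hM]
      linear_combination ((Equiv.Perm.sign σ : ℤ) : F) * h4 +
        (∏ p ∈ Finset.univ.filter (fun p : Fin (q + l) × Fin (q + l) => p.1 < p.2),
          (x p.1 - x p.2)) * hss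
    rw [hGsplit, hrectf, hscal, Polynomial.C_mul, mul_assoc]
  rw [Finset.sum_congr rfl hfiber, Finset.sum_const,
    card_fiber _ S (hScard.trans hT0card.symm), hT0card, hT0ccard, nsmul_eq_mul,
    Polynomial.C_mul, Polynomial.C_eq_natCast]
  ring
end
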